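/- Let Γ be a finite connected tetravalent graph, let (M,H) be a maximal (1/2,1)-pair of Γ, and let u be a vertex of Γ. If it is not the case that both M_u^{Γ(u)} ≅ Z_2 and H_u^{Γ(u)} ≅ D_8, then M_u^{Γ(u)} is a normal subgroup of index 2 in H_u^{Γ(u)}, and M is normal in H. -/

import Mathlib

open SimpleGraph

variable {V : Type*}

/-- The automorphism group of a simple graph, as a subgroup of the group of
permutations of the vertex set. -/
def autGroup (Γ : SimpleGraph V) : Subgroup (Equiv.Perm V) where
  carrier := {g | ∀ u v : V, Γ.Adj (g u) (g v) ↔ Γ.Adj u v}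
  one_mem' := by intro u v; simp
  mul_mem' := by
    intro a b ha hb u v
    rw [Equiv.Perm.mul_apply, Equiv.Perm.mul_apply, ha, hb]
  inv_mem' := by
    intro a ha u v
    simpa using (ha (a⁻¹ u) (a⁻¹ v)).symm

/-- `M` is transitive on the vertices of a graph on `V`. -/
def VertexTransitive (_Γ : SimpleGraph V) (M : Subgroup (Equiv.Perm V)) : Prop :=
  ∀ u v : V, ∃ g ∈ M, g u = v

/-- `M` is transitive on the edges of `Γ`. -/
def EdgeTransitive (Γ : SimpleGraph V) (M : Subgroup (Equiv.Perm V)) : Prop :=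
  ∀ u v x y : V, Γ.Adj u v → Γ.Adj x y →
    ∃ g ∈ M, (g u = x ∧ g v = y) ∨ (g u = y ∧ g v = x)

/-- `M` is transitive on the arcs (ordered pairs of adjacent vertices) of `Γ`. -/
def ArcTransitive (Γ : SimpleGraph V) (M : Subgroup (Equiv.Perm V)) : Prop :=
  ∀ u v x y : V, Γ.Adj u v → Γ.Adj x y → ∃ g ∈ M, g u = x ∧ g v = y

/-- `Γ` is `M`-half-arc-transitive: `M` consists of automorphisms of `Γ` and is
vertex- and edge- but not arc-transitive. -/
def HalfArcTransitive (Γ : SimpleGraph V) (M : Subgroup (Equiv.Perm V)) : Prop :=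
  M ≤ autGroup Γ ∧ VertexTransitive Γ M ∧ EdgeTransitive Γ M ∧ ¬ ArcTransitive Γ M

/-- `p`, restricted to `{0, …, s}`, is an `s`-arc of `Γ`. -/
def IsSArc (Γ : SimpleGraph V) (s : ℕ) (p : ℕ → V) : Prop :=
  (∀ i < s, Γ.Adj (p i) (p (i + 1))) ∧ ∀ j, 1 ≤ j → j < s → p (j - 1) ≠ p (j + 1)

/-- `Γ` is `(H, t)`-arc-transitive: `H` consists of automorphisms of `Γ` and is
transitive on the `t`-arcs of `Γ`. -/
def SArcTransitive (Γ : SimpleGraph V) (H : Subgroup (Equiv.Perm V)) (t : ℕ) : Prop :=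
  H ≤ autGroup Γ ∧ ∀ p q : ℕ → V, IsSArc Γ t p → IsSArc Γ t q →
    ∃ g ∈ H, ∀ i ≤ t, g (p i) = q i

/-- `Γ` is `(H, t)`-transitive: `(H, t)`-arc-transitive but not `(H, t+1)`-arc-transitive. -/
def STransitive (Γ : SimpleGraph V) (H : Subgroup (Equiv.Perm V)) (t : ℕ) : Prop :=
  SArcTransitive Γ H t ∧ ¬ SArcTransitive Γ H (t + 1)

/-- `M` is a maximal subgroup of `H`. -/
def IsMaximalSubgroup {G : Type*} [Group G] (M H : Subgroup G) : Prop :=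
  M < H ∧ ∀ N : Subgroup G, M ≤ N → N ≤ H → N = M ∨ N = H

/-- `(M, H)` is a maximal `(1/2, t)`-pair of `Γ`: `M` is a maximal subgroup of `H`,
`Γ` is `M`-half-arc-transitive, and `Γ` is `(H, t)`-transitive. -/
def MaximalHalfPair (Γ : SimpleGraph V) (M H : Subgroup (Equiv.Perm V)) (t : ℕ) : Prop :=
  IsMaximalSubgroup M H ∧ HalfArcTransitive Γ M ∧ STransitive Γ H t

/-- `Γ` is regular of valency `4`. -/
def Tetravalent (Γ : SimpleGraph V) : Prop := ∀ v : V, (Γ.neighborSet v).ncard = 4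

/-- `M` is a normal subgroup of `H` (both given as subgroups of an ambient group). -/
def NormalIn {G : Type*} [Group G] (M H : Subgroup G) : Prop :=
  ∀ h ∈ H, ∀ m ∈ M, h * m * h⁻¹ ∈ M

/-- The normal core of `M` in `H` (for `M ≤ H`): the largest normal subgroup of `H`
contained in `M`, namely the intersection of the `H`-conjugates of `M`. -/
def coreIn {G : Type*} [Group G] (H M : Subgroup G) : Subgroup G where
  carrier := {g | ∀ h ∈ H, h⁻¹ * g * h ∈ M}
  one_mem' := by intro h hh; simpa using M.one_mem
  mul_mem' := by
    intro a b ha hb h hh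
    have e : h⁻¹ * (a * b) * h = (h⁻¹ * a * h) * (h⁻¹ * b * h) := by group
    rw [e]; exact M.mul_mem (ha h hh) (hb h hh)
  inv_mem' := by
    intro a ha h hh
    have e : h⁻¹ * a⁻¹ * h = (h⁻¹ * a * h)⁻¹ := by group
    rw [e]; exact M.inv_mem (ha h hh)

/-- `K` is semiregular on `V`: all point stabilizers are trivial. -/
def Semiregular (K : Subgroup (Equiv.Perm V)) : Prop :=
  ∀ g ∈ K, ∀ v : V, g v = v → g = 1

/-- The normal quotient graph `Γ_K`: vertices are the `K`-orbits on `V`, two distinct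
orbits being adjacent iff `Γ` has an edge between them. -/
def quotientGraph (Γ : SimpleGraph V) (K : Subgroup (Equiv.Perm V)) :
    SimpleGraph (Quotient (MulAction.orbitRel K V)) where
  Adj x y := x ≠ y ∧ ∃ u v : V, Γ.Adj u v ∧
      Quotient.mk (MulAction.orbitRel K V) u = x ∧ Quotient.mk (MulAction.orbitRel K V) v = y
  symm := ⟨by
    rintro x y ⟨hxy, u, v, h, hu, hv⟩
    exact ⟨hxy.symm, v, u, h.symm, hv, hu⟩⟩
  loopless := ⟨fun x h => h.1 rfl⟩

/-- The set of elements of `H` stabilizing every `K`-orbit, i.e. the kernel of the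
action of `H` on the vertex set of the normal quotient graph `Γ_K`. -/
def quotKernelSet (H K : Subgroup (Equiv.Perm V)) : Set (Equiv.Perm V) :=
  {h | h ∈ H ∧ ∀ v : V, h v ∈ MulAction.orbit K v}

/-- The permutation group induced by `H` on the set of `K`-orbits; when `K` is the
kernel of the action of `H` on the set of `K`-orbits, this is (a faithful copy of)
the quotient group `H/K` acting on the normal quotient graph `Γ_K`. -/
def inducedQuot (K H : Subgroup (Equiv.Perm V)) :
    Subgroup (Equiv.Perm (Quotient (MulAction.orbitRel K V))) where
  carrier := {σ | ∃ h ∈ H, ∀ v : V,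
    σ (Quotient.mk (MulAction.orbitRel K V) v) = Quotient.mk (MulAction.orbitRel K V) (h v)}
  one_mem' := ⟨1, H.one_mem, fun v => by simp⟩
  mul_mem' := by
    rintro σ τ ⟨g, hg, hσ⟩ ⟨k, hk, hτ⟩
    refine ⟨g * k, H.mul_mem hg hk, fun v => ?_⟩
    rw [Equiv.Perm.mul_apply, hτ v, hσ (k v), Equiv.Perm.mul_apply]
  inv_mem' := by
    rintro σ ⟨g, hg, hσ⟩
    refine ⟨g⁻¹, H.inv_mem hg, fun v => ?_⟩
    have h1 := hσ (g⁻¹ v)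
    rw [show ∀ x, g (g⁻¹ x) = x from g.apply_symm_apply] at h1
    rw [← h1, show ∀ x, σ⁻¹ (σ x) = x from σ.symm_apply_apply]

/-- The permutation group `M_u^{Γ(u)}` induced on the neighbourhood `Γ(u)` by the
vertex stabilizer `M_u`. -/
def localGroup (Γ : SimpleGraph V) (M : Subgroup (Equiv.Perm V)) (u : V) :
    Subgroup (Equiv.Perm (Γ.neighborSet u)) where
  carrier := {σ | ∃ g ∈ M, g u = u ∧ ∀ v : Γ.neighborSet u, (σ v : V) = g (v : V)}
  one_mem' := ⟨1, M.one_mem, by simp, fun v => by simp⟩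
  mul_mem' := by
    rintro σ τ ⟨g, hg, hgu, hσ⟩ ⟨k, hk, hku, hτ⟩
    refine ⟨g * k, M.mul_mem hg hk, by rw [Equiv.Perm.mul_apply, hku, hgu], fun v => ?_⟩
    simp only [Equiv.Perm.mul_apply]
    rw [hσ (τ v), hτ v]
  inv_mem' := by
    rintro σ ⟨g, hg, hgu, hσ⟩
    have hgu' : g⁻¹ u = u := g.injective (by rw [show ∀ x, g (g⁻¹ x) = x from g.apply_symm_apply, hgu])
    refine ⟨g⁻¹, M.inv_mem hg, hgu', fun v => ?_⟩
    have h1 := hσ (σ⁻¹ v)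
    rw [show ∀ x, σ (σ⁻¹ x) = x from σ.apply_symm_apply] at h1
    rw [h1, show ∀ x, g⁻¹ (g x) = x from g.symm_apply_apply]

/-- The kernel `M_u^{[1]}` of the action of the vertex stabilizer `M_u` on the
neighbourhood `Γ(u)`, as a subgroup of `Equiv.Perm V`. -/
def localKernel (Γ : SimpleGraph V) (M : Subgroup (Equiv.Perm V)) (u : V) :
    Subgroup (Equiv.Perm V) :=
  (M ⊓ MulAction.stabilizer (Equiv.Perm V) u) ⊓
    ⨅ v ∈ Γ.neighborSet u, MulAction.stabilizer (Equiv.Perm V) v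

/-- The complete bipartite graph `K_{5,5}` minus a perfect matching. -/
def K55minusMatching : SimpleGraph (Fin 2 × Fin 5) where
  Adj x y := x.1 ≠ y.1 ∧ x.2 ≠ y.2
  symm := ⟨by rintro x y ⟨h1, h2⟩; exact ⟨h1.symm, h2.symm⟩⟩
  loopless := ⟨fun x h => h.1 rfl⟩

instance : Fact (Nat.Prime 5) := ⟨by norm_num⟩
instance : Fact (Nat.Prime 7) := ⟨by norm_num⟩

/-- The one-dimensional affine group `AGL_1(p)`: the group of affine permutations
`x ↦ a * x + b` (`a ≠ 0`) of `ZMod p`.  It is isomorphic to `Z_p ⋊ Z_{p-1}` with the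
faithful action; for `p = 5` it is the Frobenius group `Z_5 ⋊ Z_4` of order `20`. -/
def AGL1 (p : ℕ) [Fact (Nat.Prime p)] : Subgroup (Equiv.Perm (ZMod p)) where
  carrier := {f | ∃ a b : ZMod p, a ≠ 0 ∧ ∀ x, f x = a * x + b}
  one_mem' := ⟨1, 0, one_ne_zero, fun x => by simp⟩
  mul_mem' := by
    rintro f g ⟨a1, b1, ha1, hf⟩ ⟨a2, b2, ha2, hg⟩
    refine ⟨a1 * a2, a1 * b2 + b1, mul_ne_zero ha1 ha2, fun x => ?_⟩
    rw [Equiv.Perm.mul_apply, hg, hf]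
    ring
  inv_mem' := by
    rintro f ⟨a, b, ha, hf⟩
    refine ⟨a⁻¹, -(a⁻¹ * b), inv_ne_zero ha, fun x => ?_⟩
    have h1 : f (a⁻¹ * x + -(a⁻¹ * b)) = x := by
      rw [hf]
      field_simp
      ring
    rw [← h1, show ∀ x, f⁻¹ (f x) = x from f.symm_apply_apply, h1]

/-- The Cayley graph `Cay(G, S)`: for an inverse-closed `S ⊆ G \ {1}`, `x` and `y`
are adjacent iff `y * x⁻¹ ∈ S`. -/
def cayleyGraph (G : Type*) [Group G] (S : Set G) : SimpleGraph G :=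
  SimpleGraph.fromRel (fun x y => y * x⁻¹ ∈ S)

/-- The image `R(G)` of the right regular representation of `G` in `Equiv.Perm G`. -/
def rightRegular (G : Type*) [Group G] : Subgroup (Equiv.Perm G) where
  carrier := {σ | ∃ g : G, ∀ x : G, σ x = x * g}
  one_mem' := ⟨1, fun x => by simp⟩
  mul_mem' := by
    rintro σ τ ⟨g, hσ⟩ ⟨k, hτ⟩
    exact ⟨k * g, fun x => by rw [Equiv.Perm.mul_apply, hτ, hσ, mul_assoc]⟩
  inv_mem' := by
    rintro σ ⟨g, hσ⟩
    refine ⟨g⁻¹, fun x => ?_⟩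
    have h1 : σ (x * g⁻¹) = x := by rw [hσ, inv_mul_cancel_right]
    rw [← h1, show ∀ x, σ⁻¹ (σ x) = x from σ.symm_apply_apply, h1]

/-- The coordinate-swapping automorphism of `A × A`. -/
def swapAut (A : Type*) [Group A] : MulAut (A × A) := MulEquiv.prodComm

lemma swapAut_sq (A : Type*) [Group A] : swapAut A ^ 2 = 1 := by
  rw [pow_two]
  exact MulEquiv.ext fun p => rfl

/-- The homomorphism `Z_2 →* Aut(A × A)` sending the generator to the coordinate swap. -/
def swapHom (A : Type*) [Group A] : Multiplicative (ZMod 2) →* MulAut (A × A) where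
  toFun x := swapAut A ^ (Multiplicative.toAdd x).val
  map_one' := by simp
  map_mul' x y := by
    have h2 : swapAut A ^ 2 = 1 := swapAut_sq A
    show swapAut A ^ (Multiplicative.toAdd (x * y)).val = _
    have e : Multiplicative.toAdd (x * y) = Multiplicative.toAdd x + Multiplicative.toAdd y := rfl
    rw [e, ZMod.val_add, ← pow_eq_pow_mod _ h2, pow_add]

/-- The semidirect product `(A × A) ⋊ Z_2` in which `Z_2` swaps the two direct
factors; for a group `A` this is the wreath product `A ≀ Z_2`. -/
abbrev wreathZ2 (A : Type*) [Group A] :=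
  SemidirectProduct (A × A) (Multiplicative (ZMod 2)) (swapHom A)

/-- The projective general linear group `PGL_2(7) = GL_2(7)/Z(GL_2(7))`. -/
abbrev PGL2_7 :=
  Matrix.GeneralLinearGroup (Fin 2) (ZMod 7) ⧸
    Subgroup.center (Matrix.GeneralLinearGroup (Fin 2) (ZMod 7))

/-- The semidirect product `Z_3 ⋊ S_4` of order 72 in which the kernel of the action
of `S_4` on `Z_3` is `A_4`: concretely, the subgroup of `S_3 × S_4` consisting of the
pairs of permutations of equal sign. -/
def Z3rtimesS4 : Subgroup (Equiv.Perm (Fin 3) × Equiv.Perm (Fin 4)) :=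
  MonoidHom.ker ((Equiv.Perm.sign.comp (MonoidHom.fst (Equiv.Perm (Fin 3)) (Equiv.Perm (Fin 4)))) *
    (Equiv.Perm.sign.comp (MonoidHom.snd (Equiv.Perm (Fin 3)) (Equiv.Perm (Fin 4)))))

/-- `C` is (the vertex set of) an `M`-alternating cycle of `Γ`: a cycle along which
any two consecutive arcs lie in different `M`-orbits, i.e. consecutive edges have
opposite orientations in the orientations of `Γ` given by the two `M`-orbits on arcs. -/
def IsAltCycle (Γ : SimpleGraph V) (M : Subgroup (Equiv.Perm V)) (C : Set V) : Prop :=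
  ∃ n : ℕ, 3 ≤ n ∧ ∃ c : ZMod n → V, Function.Injective c ∧ Set.range c = C ∧
    (∀ i, Γ.Adj (c i) (c (i + 1))) ∧
    (∀ i, ¬ ∃ g ∈ M, g (c i) = c (i + 1) ∧ g (c (i + 1)) = c (i + 2))

/-- The graph `Alt_M(Γ)` of `M`-alternating cycles: vertices are the `M`-alternating
cycles of `Γ`, two of them being adjacent iff they have a common vertex. -/
def altGraph (Γ : SimpleGraph V) (M : Subgroup (Equiv.Perm V)) :
    SimpleGraph {C : Set V // IsAltCycle Γ M C} where
  Adj C D := C ≠ D ∧ (C.1 ∩ D.1).Nonempty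
  symm := ⟨by
    rintro C D ⟨h1, x, hx⟩
    exact ⟨h1.symm, x, hx.2, hx.1⟩⟩
  loopless := ⟨fun C h => h.1 rfl⟩


/-! ### Auxiliary lemmas for statement18 -/

section Statement18Aux

lemma perm_apply_inv_self {α : Type*} (f : Equiv.Perm α) (x : α) : f (f⁻¹ x) = x :=
  f.apply_symm_apply x

lemma perm_inv_apply_self {α : Type*} (f : Equiv.Perm α) (x : α) : f⁻¹ (f x) = x :=
  f.symm_apply_apply x

open Equiv

variable {V : Type*}

lemma aut_adj {Γ : SimpleGraph V} {g : Equiv.Perm V} (hg : g ∈ autGroup Γ) (a b : V) :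
    Γ.Adj (g a) (g b) ↔ Γ.Adj a b := hg a b

/-- The permutation of the neighbourhood of `w` induced by an automorphism fixing `w`. -/
def localPerm (Γ : SimpleGraph V) {g : Equiv.Perm V} (hg : g ∈ autGroup Γ) {w : V}
    (hw : g w = w) : Equiv.Perm (Γ.neighborSet w) :=
  Equiv.subtypeEquiv g (fun v => by
    simp only [SimpleGraph.mem_neighborSet]
    conv_rhs => rw [← hw]
    exact (hg w v).symm)

@[simp] lemma localPerm_coe {Γ : SimpleGraph V} {g : Equiv.Perm V} (hg : g ∈ autGroup Γ)
    {w : V} (hw : g w = w) (v : Γ.neighborSet w) :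
    (localPerm Γ hg hw v : V) = g v := rfl

lemma localPerm_mem {Γ : SimpleGraph V} {N : Subgroup (Equiv.Perm V)} (hN : N ≤ autGroup Γ)
    {g : Equiv.Perm V} (hgN : g ∈ N) {w : V} (hw : g w = w) :
    localPerm Γ (hN hgN) hw ∈ localGroup Γ N w :=
  ⟨g, hgN, hw, fun _ => rfl⟩

lemma localGroup_mono {Γ : SimpleGraph V} {N N' : Subgroup (Equiv.Perm V)} (h : N ≤ N')
    (w : V) : localGroup Γ N w ≤ localGroup Γ N' w := by
  rintro σ ⟨g, hg, hgw, hσ⟩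
  exact ⟨g, h hg, hgw, hσ⟩

/-- The orbit of the arc `(a, b)` under `M`. -/
def arcOrbit (M : Subgroup (Equiv.Perm V)) (a b : V) : Set (V × V) :=
  {p | ∃ g ∈ M, g a = p.1 ∧ g b = p.2}

lemma self_mem_arcOrbit (M : Subgroup (Equiv.Perm V)) (a b : V) : (a, b) ∈ arcOrbit M a b :=
  ⟨1, M.one_mem, rfl, rfl⟩

lemma arcOrbit_adj {Γ : SimpleGraph V} {M : Subgroup (Equiv.Perm V)} (hM : M ≤ autGroup Γ)
    {a b : V} (hab : Γ.Adj a b) {x y : V} (h : (x, y) ∈ arcOrbit M a b) : Γ.Adj x y := by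
  obtain ⟨g, hg, hx, hy⟩ := h
  have h2 : Γ.Adj (g a) (g b) := (aut_adj (hM hg) a b).mpr hab
  rw [hx, hy] at h2
  exact h2

lemma arcOrbit_smul {M : Subgroup (Equiv.Perm V)} {a b : V} {m : Equiv.Perm V} (hm : m ∈ M)
    {x y : V} (h : (x, y) ∈ arcOrbit M a b) : (m x, m y) ∈ arcOrbit M a b := by
  obtain ⟨g, hg, hx, hy⟩ := h
  exact ⟨m * g, M.mul_mem hm hg, by simp [hx], by simp [hy]⟩

lemma arcOrbit_smul_iff {M : Subgroup (Equiv.Perm V)} {a b : V} {m : Equiv.Perm V}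
    (hm : m ∈ M) {x y : V} : (m x, m y) ∈ arcOrbit M a b ↔ (x, y) ∈ arcOrbit M a b := by
  constructor
  · intro h
    have := arcOrbit_smul (M.inv_mem hm) h
    simpa using this
  · exact arcOrbit_smul hm

end Statement18Aux

section Statement18Aux2

open Equiv

variable {V : Type*} {Γ : SimpleGraph V} {M : Subgroup (Equiv.Perm V)} {a b : V}

lemma exists_swap_of_not_disjoint (hM : HalfArcTransitive Γ M) (hab : Γ.Adj a b)
    {x y : V} (h1 : (x, y) ∈ arcOrbit M a b) (h2 : (y, x) ∈ arcOrbit M a b) : False := by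
  obtain ⟨g, hg, hga, hgb⟩ := h1
  obtain ⟨g', hg', hg'a, hg'b⟩ := h2
  simp only at hga hgb hg'a hg'b
  have hm : (g⁻¹ * g') a = b := by
    simp [Equiv.Perm.mul_apply, hg'a, ← hgb]
  have hm' : (g⁻¹ * g') b = a := by
    simp [Equiv.Perm.mul_apply, hg'b, ← hga]
  set m := g⁻¹ * g' with hmdef
  have hmM : m ∈ M := M.mul_mem (M.inv_mem hg) hg'
  -- M is arc-transitive, contradiction
  apply hM.2.2.2
  intro p q r s hpq hrs
  obtain ⟨k1, hk1, hk1h⟩ := hM.2.2.1 p q a b hpq hab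
  obtain ⟨k2, hk2, hk2h⟩ := hM.2.2.1 r s a b hrs hab
  have norm : ∀ k ∈ M, (k p = a ∧ k q = b) ∨ (k p = b ∧ k q = a) →
      ∃ k' ∈ M, k' p = a ∧ k' q = b := by
    intro k hk hcase
    rcases hcase with hc | hc
    · exact ⟨k, hk, hc⟩
    · exact ⟨m * k, M.mul_mem hmM hk, by simp [Equiv.Perm.mul_apply, hc.1, hm'],
        by simp [Equiv.Perm.mul_apply, hc.2, hm]⟩
  obtain ⟨k1', hk1', hp, hq⟩ := norm k1 hk1 hk1h
  have norm2 : ∀ k ∈ M, (k r = a ∧ k s = b) ∨ (k r = b ∧ k s = a) →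
      ∃ k' ∈ M, k' r = a ∧ k' s = b := by
    intro k hk hcase
    rcases hcase with hc | hc
    · exact ⟨k, hk, hc⟩
    · exact ⟨m * k, M.mul_mem hmM hk, by simp [Equiv.Perm.mul_apply, hc.1, hm'],
        by simp [Equiv.Perm.mul_apply, hc.2, hm]⟩
  obtain ⟨k2', hk2', hr, hs⟩ := norm2 k2 hk2 hk2h
  refine ⟨k2'⁻¹ * k1', M.mul_mem (M.inv_mem hk2') hk1', ?_, ?_⟩
  · simp [Equiv.Perm.mul_apply, hp, ← hr]
  · simp [Equiv.Perm.mul_apply, hq, ← hs]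

lemma arcOrbit_cover (hM : HalfArcTransitive Γ M) (hab : Γ.Adj a b) {x y : V}
    (hxy : Γ.Adj x y) : (x, y) ∈ arcOrbit M a b ∨ (y, x) ∈ arcOrbit M a b := by
  obtain ⟨g, hg, hc⟩ := hM.2.2.1 x y a b hxy hab
  rcases hc with ⟨h1, h2⟩ | ⟨h1, h2⟩
  · left
    exact ⟨g⁻¹, M.inv_mem hg, by simp [← h1], by simp [← h2]⟩
  · right
    exact ⟨g⁻¹, M.inv_mem hg, by simp [← h2], by simp [← h1]⟩

/-- The out-neighbours of `w` in the `M`-orientation. -/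
def outSet (M : Subgroup (Equiv.Perm V)) (a b w : V) : Set V :=
  {x | (w, x) ∈ arcOrbit M a b}

/-- The in-neighbours of `w` in the `M`-orientation. -/
def inSet (M : Subgroup (Equiv.Perm V)) (a b w : V) : Set V :=
  {x | (x, w) ∈ arcOrbit M a b}

lemma outSet_subset_nbr (hM : M ≤ autGroup Γ) (hab : Γ.Adj a b) (w : V) :
    outSet M a b w ⊆ Γ.neighborSet w := fun _ hx => arcOrbit_adj hM hab hx

lemma inSet_subset_nbr (hM : M ≤ autGroup Γ) (hab : Γ.Adj a b) (w : V) :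
    inSet M a b w ⊆ Γ.neighborSet w := fun _ hx => (arcOrbit_adj hM hab hx).symm

lemma out_union_in (hM : HalfArcTransitive Γ M) (hab : Γ.Adj a b) (w : V) :
    outSet M a b w ∪ inSet M a b w = Γ.neighborSet w := by
  apply Set.Subset.antisymm
  · rintro x (hx | hx)
    · exact arcOrbit_adj hM.1 hab hx
    · exact (arcOrbit_adj hM.1 hab hx).symm
  · intro x hx
    exact arcOrbit_cover hM hab hx

lemma out_disjoint_in (hM : HalfArcTransitive Γ M) (hab : Γ.Adj a b) (w : V) :
    Disjoint (outSet M a b w) (inSet M a b w) := by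
  rw [Set.disjoint_left]
  intro x hx hx'
  exact exists_swap_of_not_disjoint hM hab hx hx'

lemma image_outSet {m : Equiv.Perm V} (hm : m ∈ M) (w : V) :
    m '' outSet M a b w = outSet M a b (m w) := by
  ext y
  constructor
  · rintro ⟨x, hx, rfl⟩
    exact arcOrbit_smul hm hx
  · intro hy
    refine ⟨m⁻¹ y, ?_, by simp⟩
    have : (m (m⁻¹ y)) = y := by simp
    rw [outSet, Set.mem_setOf_eq, ← this] at hy
    exact (arcOrbit_smul_iff hm).mp hy

lemma image_inSet {m : Equiv.Perm V} (hm : m ∈ M) (w : V) :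
    m '' inSet M a b w = inSet M a b (m w) := by
  ext y
  constructor
  · rintro ⟨x, hx, rfl⟩
    exact arcOrbit_smul hm hx
  · intro hy
    refine ⟨m⁻¹ y, ?_, by simp⟩
    have : (m (m⁻¹ y)) = y := by simp
    rw [inSet, Set.mem_setOf_eq, ← this] at hy
    exact (arcOrbit_smul_iff hm).mp hy

lemma outSet_trans {w x y : V} (hx : x ∈ outSet M a b w) (hy : y ∈ outSet M a b w) :
    ∃ m ∈ M, m w = w ∧ m x = y := by
  obtain ⟨g, hg, hg1, hg2⟩ := hx
  obtain ⟨g', hg', hg'1, hg'2⟩ := hy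
  simp only at hg1 hg2 hg'1 hg'2
  refine ⟨g' * g⁻¹, M.mul_mem hg' (M.inv_mem hg), ?_, ?_⟩
  · simp [Equiv.Perm.mul_apply, ← hg1, hg'1]
  · simp [Equiv.Perm.mul_apply, ← hg2, hg'2]

end Statement18Aux2

section Statement18Aux3

open Equiv

variable {V : Type*} {Γ : SimpleGraph V} {M : Subgroup (Equiv.Perm V)} {a b : V}

lemma out_in_card [Fintype V] (hM : HalfArcTransitive Γ M) (hab : Γ.Adj a b)
    (htetra : Tetravalent Γ) (w : V) :
    (outSet M a b w).ncard = 2 ∧ (inSet M a b w).ncard = 2 := by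
  classical
  have cst_out : ∀ w' : V, (outSet M a b w').ncard = (outSet M a b w).ncard := by
    intro w'
    obtain ⟨m, hm, hmw⟩ := hM.2.1 w w'
    rw [← hmw, ← image_outSet hm, Set.ncard_image_of_injective _ m.injective]
  have cst_in : ∀ w' : V, (inSet M a b w').ncard = (inSet M a b w).ncard := by
    intro w'
    obtain ⟨m, hm, hmw⟩ := hM.2.1 w w'
    rw [← hmw, ← image_inSet hm, Set.ncard_image_of_injective _ m.injective]
  have e1 : {p : V × V // p ∈ arcOrbit M a b} ≃ Σ w' : V, {x // x ∈ outSet M a b w'} :=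
    { toFun := fun p => ⟨p.1.1, p.1.2, by
        have := p.2
        rw [show p.1 = (p.1.1, p.1.2) from rfl] at this
        exact this⟩
      invFun := fun s => ⟨(s.1, s.2.1), s.2.2⟩
      left_inv := fun ⟨⟨x, y⟩, h⟩ => rfl
      right_inv := fun ⟨w', x, h⟩ => rfl }
  have e2 : {p : V × V // p ∈ arcOrbit M a b} ≃ Σ w' : V, {x // x ∈ inSet M a b w'} :=
    { toFun := fun p => ⟨p.1.2, p.1.1, by
        have := p.2
        rw [show p.1 = (p.1.1, p.1.2) from rfl] at this
        exact this⟩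
      invFun := fun s => ⟨(s.2.1, s.1), s.2.2⟩
      left_inv := fun ⟨⟨x, y⟩, h⟩ => rfl
      right_inv := fun ⟨w', x, h⟩ => rfl }
  have hsum1 : Nat.card {p : V × V // p ∈ arcOrbit M a b}
      = ∑ w' : V, (outSet M a b w').ncard := by
    rw [Nat.card_congr e1, Nat.card_eq_fintype_card, Fintype.card_sigma]
    congr 1
    ext w'
    rw [← Nat.card_coe_set_eq, Nat.card_eq_fintype_card]
  have hsum2 : Nat.card {p : V × V // p ∈ arcOrbit M a b}
      = ∑ w' : V, (inSet M a b w').ncard := by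
    rw [Nat.card_congr e2, Nat.card_eq_fintype_card, Fintype.card_sigma]
    congr 1
    ext w'
    rw [← Nat.card_coe_set_eq, Nat.card_eq_fintype_card]
  have hc1 : ∑ w' : V, (outSet M a b w').ncard = Fintype.card V * (outSet M a b w).ncard := by
    rw [Finset.sum_congr rfl (fun w' _ => cst_out w'), Finset.sum_const, Finset.card_univ,
      smul_eq_mul]
  have hc2 : ∑ w' : V, (inSet M a b w').ncard = Fintype.card V * (inSet M a b w).ncard := by
    rw [Finset.sum_congr rfl (fun w' _ => cst_in w'), Finset.sum_const, Finset.card_univ,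
      smul_eq_mul]
  have hVpos : 0 < Fintype.card V := Fintype.card_pos_iff.mpr ⟨w⟩
  have heq : (outSet M a b w).ncard = (inSet M a b w).ncard := by
    have := hsum1.symm.trans hsum2
    rw [hc1, hc2] at this
    exact Nat.eq_of_mul_eq_mul_left hVpos this
  have hsum4 : (outSet M a b w).ncard + (inSet M a b w).ncard = 4 := by
    rw [← Set.ncard_union_eq (out_disjoint_in hM hab w) (Set.toFinite _) (Set.toFinite _),
      out_union_in hM hab w]
    exact htetra w
  omega

end Statement18Aux3

section Statement18Aux4

open Equiv

variable {V : Type*} {Γ : SimpleGraph V} {H : Subgroup (Equiv.Perm V)}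

lemma arcTrans_of_sArc1 (hH : SArcTransitive Γ H 1) : ArcTransitive Γ H := by
  intro x y z t hxy hzt
  have h1 : IsSArc Γ 1 (fun i => if i = 0 then x else y) := by
    constructor
    · intro i hi
      have : i = 0 := by omega
      simp [this, hxy]
    · intro j hj1 hj2
      omega
  have h2 : IsSArc Γ 1 (fun i => if i = 0 then z else t) := by
    constructor
    · intro i hi
      have : i = 0 := by omega
      simp [this, hzt]
    · intro j hj1 hj2
      omega
  obtain ⟨g, hg, hgi⟩ := hH.2 _ _ h1 h2
  refine ⟨g, hg, ?_, ?_⟩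
  · have := hgi 0 (by omega)
    simpa using this
  · have := hgi 1 (by omega)
    simpa using this

lemma bad_triple (hH : SArcTransitive Γ H 1) (hn2 : ¬ SArcTransitive Γ H 2)
    (u v₀ : V) (hv₀ : Γ.Adj u v₀) :
    ∃ w w', Γ.Adj u w ∧ Γ.Adj u w' ∧ w ≠ v₀ ∧ w' ≠ v₀ ∧
      ¬ ∃ g ∈ H, g u = u ∧ g v₀ = v₀ ∧ g w = w' := by
  by_contra hcon
  push_neg at hcon
  apply hn2
  refine ⟨hH.1, fun p q hp hq => ?_⟩
  have hadj01 : Γ.Adj (p 0) (p 1) := hp.1 0 (by omega)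
  have hadj12 : Γ.Adj (p 1) (p 2) := hp.1 1 (by omega)
  have hp02 : p 0 ≠ p 2 := by
    have := hp.2 1 (le_refl 1) (by omega)
    simpa using this
  have hadj01' : Γ.Adj (q 0) (q 1) := hq.1 0 (by omega)
  have hadj12' : Γ.Adj (q 1) (q 2) := hq.1 1 (by omega)
  have hq02 : q 0 ≠ q 2 := by
    have := hq.2 1 (le_refl 1) (by omega)
    simpa using this
  obtain ⟨g1, hg1, hg1a, hg1b⟩ := arcTrans_of_sArc1 hH (p 1) (p 0) u v₀ hadj01.symm hv₀
  obtain ⟨g2, hg2, hg2a, hg2b⟩ := arcTrans_of_sArc1 hH (q 1) (q 0) u v₀ hadj01'.symm hv₀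
  set w := g1 (p 2) with hw
  set w' := g2 (q 2) with hw'
  have hadjw : Γ.Adj u w := by
    rw [← hg1a, hw]
    exact (aut_adj (hH.1 hg1) _ _).mpr hadj12
  have hadjw' : Γ.Adj u w' := by
    rw [← hg2a, hw']
    exact (aut_adj (hH.1 hg2) _ _).mpr hadj12'
  have hwv : w ≠ v₀ := by
    rw [hw, ← hg1b]
    intro hcontra
    exact hp02 (g1.injective hcontra).symm
  have hw'v : w' ≠ v₀ := by
    rw [hw', ← hg2b]
    intro hcontra
    exact hq02 (g2.injective hcontra).symm
  obtain ⟨k, hk, hku, hkv, hkw⟩ := hcon w w' hadjw hadjw' hwv hw'v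
  refine ⟨g2⁻¹ * k * g1, H.mul_mem (H.mul_mem (H.inv_mem hg2) hk) hg1, ?_⟩
  intro i hi
  interval_cases i
  · simp only [Equiv.Perm.mul_apply]
    rw [hg1b, hkv, ← hg2b]
    simp
  · simp only [Equiv.Perm.mul_apply]
    rw [hg1a, hku, ← hg2a]
    simp
  · simp only [Equiv.Perm.mul_apply]
    rw [← hw, hkw, hw']
    simp

end Statement18Aux4

section Statement18Aux5

open Equiv

variable {V : Type*} {Γ : SimpleGraph V}

/-- The bijection of neighbourhoods induced by an automorphism. -/
def nbrEquiv (Γ : SimpleGraph V) {g : Equiv.Perm V} (hg : g ∈ autGroup Γ) (w : V) :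
    Γ.neighborSet w ≃ Γ.neighborSet (g w) :=
  Equiv.subtypeEquiv g (fun v => by
    simp only [SimpleGraph.mem_neighborSet]
    exact (hg w v).symm)

@[simp] lemma nbrEquiv_coe {g : Equiv.Perm V} (hg : g ∈ autGroup Γ) (w : V)
    (v : Γ.neighborSet w) : (nbrEquiv Γ hg w v : V) = g v := rfl

@[simp] lemma nbrEquiv_symm_coe {g : Equiv.Perm V} (hg : g ∈ autGroup Γ) (w : V)
    (v : Γ.neighborSet (g w)) : ((nbrEquiv Γ hg w).symm v : V) = g⁻¹ v := rfl

lemma permCongr_mem_localGroup {N : Subgroup (Equiv.Perm V)} (hN : N ≤ autGroup Γ)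
    {g : Equiv.Perm V} (hgaut : g ∈ autGroup Γ)
    (hgconj : ∀ k ∈ N, g * k * g⁻¹ ∈ N) (w : V)
    {σ : Equiv.Perm (Γ.neighborSet w)} (hσ : σ ∈ localGroup Γ N w) :
    (nbrEquiv Γ hgaut w).permCongr σ ∈ localGroup Γ N (g w) := by
  obtain ⟨k, hk, hkw, hkσ⟩ := hσ
  refine ⟨g * k * g⁻¹, hgconj k hk, by simp [Equiv.Perm.mul_apply, hkw], fun v => ?_⟩
  simp only [Equiv.permCongr_apply, Equiv.Perm.mul_apply]
  rw [nbrEquiv_coe, hkσ, nbrEquiv_symm_coe]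

lemma permCongr_symm_mem_localGroup {N : Subgroup (Equiv.Perm V)} (hN : N ≤ autGroup Γ)
    {g : Equiv.Perm V} (hgaut : g ∈ autGroup Γ)
    (hgconj : ∀ k ∈ N, g⁻¹ * k * g ∈ N) (w : V)
    {τ : Equiv.Perm (Γ.neighborSet (g w))} (hτ : τ ∈ localGroup Γ N (g w)) :
    (nbrEquiv Γ hgaut w).permCongr.symm τ ∈ localGroup Γ N w := by
  obtain ⟨k, hk, hkw, hkτ⟩ := hτ
  refine ⟨g⁻¹ * k * g, hgconj k hk, ?_, fun v => ?_⟩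
  · simp only [Equiv.Perm.mul_apply]
    rw [hkw]
    simp
  · simp only [Equiv.permCongr_symm_apply, Equiv.Perm.mul_apply]
    rw [nbrEquiv_symm_coe, hkτ, nbrEquiv_coe]

/-- Conjugation induces a bijection between local groups at `w` and at `g w`. -/
noncomputable def localGroupConjEquiv {N : Subgroup (Equiv.Perm V)} (hN : N ≤ autGroup Γ)
    {g : Equiv.Perm V} (hgaut : g ∈ autGroup Γ)
    (hgconj : ∀ k, k ∈ N ↔ g * k * g⁻¹ ∈ N) (w : V) :
    localGroup Γ N w ≃ localGroup Γ N (g w) := by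
  refine Equiv.subtypeEquiv (nbrEquiv Γ hgaut w).permCongr (fun σ => ⟨?_, ?_⟩)
  · intro hσ
    exact permCongr_mem_localGroup hN hgaut (fun k hk => (hgconj k).mp hk) w hσ
  · intro hσ
    have := permCongr_symm_mem_localGroup hN hgaut (fun k hk => ?_) w hσ
    · rwa [Equiv.symm_apply_apply] at this
    · have h2 := (hgconj (g⁻¹ * k * g)).mpr
      apply h2
      have : g * (g⁻¹ * k * g) * g⁻¹ = k := by group
      rwa [this]

lemma localGroup_card_conj {N : Subgroup (Equiv.Perm V)} (hN : N ≤ autGroup Γ)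
    {g : Equiv.Perm V} (hgN : g ∈ N) (w : V) :
    Nat.card (localGroup Γ N w) = Nat.card (localGroup Γ N (g w)) :=
  Nat.card_congr (localGroupConjEquiv hN (hN hgN)
    (fun k => ⟨fun hk => N.mul_mem (N.mul_mem hgN hk) (N.inv_mem hgN),
      fun hk => by
        have := N.mul_mem (N.mul_mem (N.inv_mem hgN) hk) hgN
        simpa [mul_assoc] using this⟩) w)

end Statement18Aux5

section Statement18Aux6

open Equiv

variable {V : Type*} {Γ : SimpleGraph V} {H : Subgroup (Equiv.Perm V)}

lemma localGroup_transitive (hHaut : H ≤ autGroup Γ) (hAT : ArcTransitive Γ H) {u : V}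
    (x y : Γ.neighborSet u) : ∃ σ ∈ localGroup Γ H u, σ x = y := by
  obtain ⟨g, hg, hgu, hgx⟩ := hAT u x u y x.2 y.2
  refine ⟨localPerm Γ (hHaut hg) hgu, localPerm_mem hHaut hg hgu, ?_⟩
  apply Subtype.ext
  rw [localPerm_coe, hgx]

lemma five_distinct_absurd {Y : Type*} [Fintype Y] [DecidableEq Y] (hY : Fintype.card Y = 4)
    {a b c d e : Y} (hab : a ≠ b) (hac : a ≠ c) (had : a ≠ d) (hae : a ≠ e)
    (hbc : b ≠ c) (hbd : b ≠ d) (hbe : b ≠ e) (hcd : c ≠ d) (hce : c ≠ e) (hde : d ≠ e) :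
    False := by
  have h5 : ({a, b, c, d, e} : Finset Y).card = 5 := by
    rw [Finset.card_insert_of_notMem (by simp [hab, hac, had, hae]),
      Finset.card_insert_of_notMem (by simp [hbc, hbd, hbe]),
      Finset.card_insert_of_notMem (by simp [hcd, hce]),
      Finset.card_insert_of_notMem (by simp [hde]),
      Finset.card_singleton]
  have := Finset.card_le_univ ({a, b, c, d, e} : Finset Y)
  rw [h5] at this
  omega

lemma four_distinct_univ {Y : Type*} [Fintype Y] [DecidableEq Y] (hY : Fintype.card Y = 4)
    {a b c d : Y} (hab : a ≠ b) (hac : a ≠ c) (had : a ≠ d)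
    (hbc : b ≠ c) (hbd : b ≠ d) (hcd : c ≠ d) (x : Y) :
    x = a ∨ x = b ∨ x = c ∨ x = d := by
  have h4 : ({a, b, c, d} : Finset Y).card = 4 := by
    rw [Finset.card_insert_of_notMem (by simp [hab, hac, had]),
      Finset.card_insert_of_notMem (by simp [hbc, hbd]),
      Finset.card_insert_of_notMem (by simp [hcd]),
      Finset.card_singleton]
  have huniv : ({a, b, c, d} : Finset Y) = Finset.univ :=
    Finset.eq_univ_of_card _ (h4.trans hY.symm)
  have hx : x ∈ ({a, b, c, d} : Finset Y) := huniv ▸ Finset.mem_univ x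
  simpa using hx

lemma card_nbr (htetra : Tetravalent Γ) (u : V) :
    Nat.card (Γ.neighborSet u) = 4 := by
  rw [Nat.card_coe_set_eq]
  exact htetra u

lemma card_localGroup_H_eq [Fintype V] (htetra : Tetravalent Γ) (hHaut : H ≤ autGroup Γ)
    (hAT : ArcTransitive Γ H) {u : V} (v₀ : Γ.neighborSet u) :
    Nat.card (localGroup Γ H u)
      = 4 * Nat.card (MulAction.stabilizer (localGroup Γ H u) v₀) := by
  classical
  have horb : MulAction.orbit (localGroup Γ H u) v₀ = Set.univ := by
    apply Set.eq_univ_of_forall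
    intro y
    obtain ⟨σ, hσ, hσy⟩ := localGroup_transitive hHaut hAT v₀ y
    exact ⟨⟨σ, hσ⟩, hσy⟩
  have hcongr := Nat.card_congr (MulAction.orbitProdStabilizerEquivGroup (localGroup Γ H u) v₀)
  rw [Nat.card_prod] at hcongr
  rw [← hcongr, horb]
  congr 1
  rw [Nat.card_coe_set_eq, Set.ncard_univ]
  exact card_nbr htetra u

lemma card_localGroup_H_cases [Fintype V] (htetra : Tetravalent Γ) (hH1 : SArcTransitive Γ H 1)
    (hn2 : ¬ SArcTransitive Γ H 2) {u : V} (v₀ : Γ.neighborSet u) :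
    Nat.card (localGroup Γ H u) = 4 ∨ Nat.card (localGroup Γ H u) = 8 := by
  classical
  have hHaut := hH1.1
  have hAT := arcTrans_of_sArc1 hH1
  have hOS := card_localGroup_H_eq htetra hHaut hAT v₀
  haveI : Fintype (Γ.neighborSet u) := Fintype.ofFinite _
  have hYcard : Fintype.card (Γ.neighborSet u) = 4 := by
    rw [← Nat.card_eq_fintype_card]
    exact card_nbr htetra u
  have h24 : Nat.card (Equiv.Perm (Γ.neighborSet u)) = 24 := by
    rw [Nat.card_eq_fintype_card, Fintype.card_perm, hYcard]
    norm_num [Nat.factorial]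
  have hdvd : Nat.card (localGroup Γ H u) ∣ 24 := by
    have := Subgroup.card_subgroup_dvd_card (localGroup Γ H u)
    rwa [h24] at this
  obtain ⟨s, hsdef⟩ : ∃ s, Nat.card (MulAction.stabilizer (localGroup Γ H u) v₀) = s :=
    ⟨_, rfl⟩
  rw [hsdef] at hOS
  have hS6 : s ∣ 6 := by
    obtain ⟨k, hk⟩ := hdvd
    rw [hOS, mul_assoc] at hk
    exact ⟨k, by omega⟩
  have h3 : ¬ (3 ∣ s) := by
    intro h3d
    haveI : Fact (Nat.Prime 3) := ⟨by norm_num⟩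
    rw [← hsdef] at h3d
    obtain ⟨sg0, hsg0⟩ := exists_prime_orderOf_dvd_card' 3 h3d
    obtain ⟨w, w', hw, hw', hwv, hw'v, hbad⟩ := bad_triple hH1 hn2 u v₀ v₀.2
    set σ : Equiv.Perm (Γ.neighborSet u) :=
      (((sg0 : localGroup Γ H u) : localGroup Γ H u) : Equiv.Perm (Γ.neighborSet u)) with hσdef
    have hσP : σ ∈ localGroup Γ H u := ((sg0 : localGroup Γ H u)).2
    have hord : orderOf σ = 3 := by
      rw [← hsg0, hσdef, Subgroup.orderOf_coe, Subgroup.orderOf_coe]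
    have hσv₀ : σ v₀ = v₀ := by
      have h := sg0.2
      rw [MulAction.mem_stabilizer_iff, Subgroup.smul_def, Equiv.Perm.smul_def] at h
      exact h
    have hσ3 : σ ^ 3 = 1 := by
      rw [← hord]
      exact pow_orderOf_eq_one σ
    have hmul : ∀ x : Γ.neighborSet u, (σ * σ) x = σ (σ x) := fun x => rfl
    have hnofix : ∀ yh : Γ.neighborSet u, yh ≠ v₀ → σ yh ≠ yh := by
      intro yh hne hfix
      have hsq : σ ^ 2 = 1 := by
        ext xh
        rw [pow_two]
        rw [hmul, Equiv.Perm.one_apply]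
        by_cases h1 : xh = v₀
        · rw [h1, hσv₀, hσv₀]
        by_cases h2 : xh = yh
        · rw [h2, hfix, hfix]
        by_cases h3 : σ xh = xh
        · rw [h3, h3]
        by_cases h4 : σ (σ xh) = xh
        · exact congrArg Subtype.val h4
        exfalso
        have d1 : σ xh ≠ v₀ := fun hc => h1 (σ.injective (hc.trans hσv₀.symm))
        have d2 : σ (σ xh) ≠ v₀ := fun hc => d1 (σ.injective (hc.trans hσv₀.symm))
        have d3 : σ xh ≠ yh := fun hc => h2 (σ.injective (hc.trans hfix.symm))
        have d4 : σ (σ xh) ≠ yh := fun hc => d3 (σ.injective (hc.trans hfix.symm))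
        have d5 : σ xh ≠ σ (σ xh) := fun hc => h3 (σ.injective hc).symm
        exact five_distinct_absurd hYcard (Ne.symm hne) (Ne.symm h1) (Ne.symm d1) (Ne.symm d2)
          (Ne.symm h2) (Ne.symm d3) (Ne.symm d4) (Ne.symm h3) (Ne.symm h4) d5
      have : orderOf σ ∣ 2 := orderOf_dvd_of_pow_eq_one hsq
      rw [hord] at this
      norm_num at this
    set wa : Γ.neighborSet u := ⟨w, hw⟩ with hwa
    set wb : Γ.neighborSet u := ⟨w', hw'⟩ with hwb
    have hwav : wa ≠ v₀ := fun hc => hwv (congrArg Subtype.val hc)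
    have hwbv : wb ≠ v₀ := fun hc => hw'v (congrArg Subtype.val hc)
    have e1 : σ wa ≠ wa := hnofix wa hwav
    have e2 : σ wa ≠ v₀ := fun hc => hwav (σ.injective (hc.trans hσv₀.symm))
    have e3 : σ (σ wa) ≠ v₀ := fun hc => e2 (σ.injective (hc.trans hσv₀.symm))
    have hmul3 : ∀ x : Γ.neighborSet u, (σ ^ 3) x = σ (σ (σ x)) := by
      intro x
      rw [pow_succ, pow_succ, pow_one, Equiv.Perm.mul_apply, Equiv.Perm.mul_apply]
    have e4 : σ (σ wa) ≠ wa := by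
      intro hc
      apply e1
      have h1 : σ (σ (σ wa)) = σ wa := congrArg σ hc
      have h2 : σ (σ (σ wa)) = wa := by
        rw [← hmul3, hσ3]
        rfl
      rw [h2] at h1
      exact h1.symm
    have e5 : σ (σ wa) ≠ σ wa := fun hc => e1 (σ.injective hc)
    have hcases := four_distinct_univ hYcard (Ne.symm hwav) (Ne.symm e2) (Ne.symm e3)
      (Ne.symm e1) (Ne.symm e4) (Ne.symm e5) wb
    have getg : ∀ τ : Equiv.Perm (Γ.neighborSet u), τ ∈ localGroup Γ H u → τ v₀ = v₀ →
        τ wa = wb → False := by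
      intro τ hτ hτv hτw
      obtain ⟨g, hg, hgu, hcoe⟩ := hτ
      apply hbad
      refine ⟨g, hg, hgu, ?_, ?_⟩
      · have := hcoe v₀
        rw [hτv] at this
        exact this.symm
      · have := hcoe wa
        rw [hτw] at this
        exact this.symm
    rcases hcases with hc | hc | hc | hc
    · exact hwbv hc
    · apply hbad
      refine ⟨1, H.one_mem, rfl, rfl, ?_⟩
      have : (wb : V) = (wa : V) := congrArg Subtype.val hc
      simpa using this.symm
    · exact getg σ hσP hσv₀ hc.symm
    · refine getg (σ * σ) ((localGroup Γ H u).mul_mem hσP hσP) ?_ ?_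
      · rw [hmul, hσv₀, hσv₀]
      · rw [hmul]
        exact hc.symm
  have hspos : 0 < s := by
    rw [← hsdef]
    exact Nat.card_pos
  have hsle : s ≤ 6 := Nat.le_of_dvd (by norm_num) hS6
  interval_cases s
  · left; omega
  · right; omega
  · exact absurd (by norm_num : (3:ℕ) ∣ 3) h3
  · exact absurd hS6 (by norm_num)
  · exact absurd hS6 (by norm_num)
  · exact absurd (by norm_num : (3:ℕ) ∣ 6) h3

end Statement18Aux6

section Statement18Aux7

open Equiv

variable {V : Type*} {Γ : SimpleGraph V} {M : Subgroup (Equiv.Perm V)} {a b : V}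

lemma localGroup_M_maps_out (hM : HalfArcTransitive Γ M) (hab : Γ.Adj a b) {u : V}
    {σ : Equiv.Perm (Γ.neighborSet u)} (hσ : σ ∈ localGroup Γ M u)
    {x : Γ.neighborSet u} (hx : (x : V) ∈ outSet M a b u) : (σ x : V) ∈ outSet M a b u := by
  obtain ⟨g, hg, hgu, hcoe⟩ := hσ
  rw [hcoe x]
  have := arcOrbit_smul hg hx
  rwa [hgu] at this

lemma localGroup_M_card_lb [Fintype V] (hM : HalfArcTransitive Γ M) (hab : Γ.Adj a b)
    (htetra : Tetravalent Γ) (u : V) :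
    2 ≤ Nat.card (localGroup Γ M u) := by
  obtain ⟨hout, _⟩ := out_in_card hM hab htetra u
  obtain ⟨v₀, v₁, hne, hset⟩ := Set.ncard_eq_two.mp hout
  have hv₀ : v₀ ∈ outSet M a b u := by rw [hset]; left; rfl
  have hv₁ : v₁ ∈ outSet M a b u := by rw [hset]; right; rfl
  obtain ⟨m, hm, hmu, hmv⟩ := outSet_trans hv₀ hv₁
  have hv₀n : v₀ ∈ Γ.neighborSet u := outSet_subset_nbr hM.1 hab u hv₀
  have hv₁n : v₁ ∈ Γ.neighborSet u := outSet_subset_nbr hM.1 hab u hv₁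
  set σ := localPerm Γ (hM.1 hm) hmu with hσ
  have hσmem : σ ∈ localGroup Γ M u := localPerm_mem hM.1 hm hmu
  have hσne : σ ≠ 1 := by
    intro hc
    have h1 : (σ ⟨v₀, hv₀n⟩ : V) = m v₀ := rfl
    rw [hc] at h1
    simp only [Equiv.Perm.one_apply] at h1
    rw [hmv] at h1
    exact hne h1
  have : Nontrivial (localGroup Γ M u) := by
    exact ⟨⟨1, (localGroup Γ M u).one_mem⟩, ⟨σ, hσmem⟩, by
      intro hc
      exact hσne (congrArg Subtype.val hc).symm⟩
  exact Finite.one_lt_card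

lemma localGroup_M_ne_H [Fintype V] {H : Subgroup (Equiv.Perm V)}
    (hM : HalfArcTransitive Γ M) (hab : Γ.Adj a b) (htetra : Tetravalent Γ)
    (hHaut : H ≤ autGroup Γ) (hAT : ArcTransitive Γ H) (u : V) :
    localGroup Γ M u ≠ localGroup Γ H u := by
  intro hc
  obtain ⟨hout, hin⟩ := out_in_card hM hab htetra u
  obtain ⟨v₀, v₁, hne, hset⟩ := Set.ncard_eq_two.mp hout
  obtain ⟨y₀, y₁, hney, hsety⟩ := Set.ncard_eq_two.mp hin
  have hv₀ : v₀ ∈ outSet M a b u := by rw [hset]; left; rfl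
  have hy₀ : y₀ ∈ inSet M a b u := by rw [hsety]; left; rfl
  have hv₀n : v₀ ∈ Γ.neighborSet u := outSet_subset_nbr hM.1 hab u hv₀
  have hy₀n : y₀ ∈ Γ.neighborSet u := inSet_subset_nbr hM.1 hab u hy₀
  obtain ⟨σ, hσ, hσv⟩ := localGroup_transitive hHaut hAT ⟨v₀, hv₀n⟩ ⟨y₀, hy₀n⟩
  rw [← hc] at hσ
  have := localGroup_M_maps_out hM hab hσ (x := ⟨v₀, hv₀n⟩) hv₀
  rw [hσv] at this
  exact (out_disjoint_in hM hab u).le_bot ⟨this, hy₀⟩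

end Statement18Aux7

section Statement18Aux8

lemma relindex_normalIn {G : Type*} [Group G] {A B : Subgroup G} (hle : A ≤ B)
    (hcard : Nat.card B = 2 * Nat.card A) (hpos : 0 < Nat.card A) :
    A.relIndex B = 2 ∧ NormalIn A B := by
  have hsub : Nat.card (A.subgroupOf B) = Nat.card A :=
    Nat.card_congr (Subgroup.subgroupOfEquivOfLe hle).toEquiv
  have hidx : (A.subgroupOf B).index = 2 := by
    have h := Subgroup.card_mul_index (A.subgroupOf B)
    rw [hsub, hcard, mul_comm 2] at h
    exact Nat.eq_of_mul_eq_mul_left hpos h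
  refine ⟨hidx, ?_⟩
  intro h hh m hm
  have hmK : (⟨m, hle hm⟩ : B) ∈ A.subgroupOf B := by
    rwa [Subgroup.mem_subgroupOf]
  have key : (⟨h, hh⟩ : B) * ⟨m, hle hm⟩ * (⟨h, hh⟩ : B)⁻¹ ∈ A.subgroupOf B := by
    rw [Subgroup.mul_mem_iff_of_index_two hidx, Subgroup.mul_mem_iff_of_index_two hidx,
      inv_mem_iff]
    tauto
  rw [Subgroup.mem_subgroupOf] at key
  simpa using key

end Statement18Aux8

section Statement18Aux9

open Equiv

variable {V : Type*} {Γ : SimpleGraph V} {H : Subgroup (Equiv.Perm V)}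

lemma connected_ind (hconn : Γ.Connected) (P : V → Prop) (u : V) (hu : P u)
    (hstep : ∀ x y, Γ.Adj x y → P x → P y) : ∀ v, P v := by
  have key : ∀ (x y : V) (_ : Γ.Walk x y), P x → P y := by
    intro x y p
    induction p with
    | nil => exact id
    | cons h _ ih => exact fun hx => ih (hstep _ _ h hx)
  intro v
  obtain ⟨p⟩ := hconn u v
  exact key u v p hu

lemma reg_of_card4 [Fintype V] (htetra : Tetravalent Γ) (hHaut : H ≤ autGroup Γ)
    (hAT : ArcTransitive Γ H) {w : V} (h4 : Nat.card (localGroup Γ H w) = 4)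
    {g : Equiv.Perm V} (hg : g ∈ H) (hgw : g w = w) {x : V} (hx : x ∈ Γ.neighborSet w)
    (hgx : g x = x) : ∀ y ∈ Γ.neighborSet w, g y = y := by
  classical
  have hOS := card_localGroup_H_eq htetra hHaut hAT (⟨x, hx⟩ : Γ.neighborSet w)
  rw [h4] at hOS
  have hstab1 : Nat.card (MulAction.stabilizer (localGroup Γ H w) (⟨x, hx⟩ : Γ.neighborSet w))
      = 1 := by omega
  have hbot := Subgroup.card_eq_one.mp hstab1
  set σ := localPerm Γ (hHaut hg) hgw with hσ
  have hσmem : σ ∈ localGroup Γ H w := localPerm_mem hHaut hg hgw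
  have hσstab : (⟨σ, hσmem⟩ : localGroup Γ H w)
      ∈ MulAction.stabilizer (localGroup Γ H w) (⟨x, hx⟩ : Γ.neighborSet w) := by
    rw [MulAction.mem_stabilizer_iff, Subgroup.smul_def, Equiv.Perm.smul_def]
    apply Subtype.ext
    rw [localPerm_coe]
    exact hgx
  rw [hbot, Subgroup.mem_bot] at hσstab
  have hσ1 : σ = 1 := congrArg Subtype.val hσstab
  intro y hy
  have h2 : (σ ⟨y, hy⟩ : V) = g y := rfl
  rw [hσ1] at h2
  simp only [Equiv.Perm.one_apply] at h2
  exact h2.symm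

lemma arc_stab_trivial [Fintype V] (hconn : Γ.Connected) (htetra : Tetravalent Γ)
    (hHaut : H ≤ autGroup Γ) (hAT : ArcTransitive Γ H)
    (hall4 : ∀ w : V, Nat.card (localGroup Γ H w) = 4)
    {u v₀ : V} (huv : Γ.Adj u v₀) {g : Equiv.Perm V} (hg : g ∈ H) (hgu : g u = u)
    (hgv : g v₀ = v₀) : g = 1 := by
  have base : g u = u ∧ ∀ y ∈ Γ.neighborSet u, g y = y :=
    ⟨hgu, reg_of_card4 htetra hHaut hAT (hall4 u) hg hgu huv hgv⟩
  have hstep : ∀ x y, Γ.Adj x y → (g x = x ∧ ∀ z ∈ Γ.neighborSet x, g z = z) →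
      (g y = y ∧ ∀ z ∈ Γ.neighborSet y, g z = z) := by
    rintro x y hxy ⟨hfx, hfnbr⟩
    have hgy : g y = y := hfnbr y hxy
    exact ⟨hgy, reg_of_card4 htetra hHaut hAT (hall4 y) hg hgy
      (x := x) hxy.symm hfx⟩
  have main := connected_ind hconn
    (fun w => g w = w ∧ ∀ z ∈ Γ.neighborSet w, g z = z) u base hstep
  ext w
  simp only [Equiv.Perm.coe_one, id_eq]
  exact (main w).1

end Statement18Aux9

section Statement18Aux9b

open Equiv

variable {V : Type*} {Γ : SimpleGraph V} {N : Subgroup (Equiv.Perm V)}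

lemma card_vertexStab_eq_local [Fintype V] (hNaut : N ≤ autGroup Γ) {u : V}
    (hker : ∀ g ∈ N, g u = u → (∀ y ∈ Γ.neighborSet u, g y = y) → g = 1) :
    Nat.card (MulAction.stabilizer N u) = Nat.card (localGroup Γ N u) := by
  apply Nat.card_eq_of_bijective
    (fun h => ⟨localPerm Γ (hNaut h.1.2) h.2, localPerm_mem hNaut h.1.2 h.2⟩)
  constructor
  · rintro ⟨⟨g, hgN⟩, hgu⟩ ⟨⟨g', hg'N⟩, hg'u⟩ heq
    have heq' : localPerm Γ (hNaut hgN) hgu = localPerm Γ (hNaut hg'N) hg'u :=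
      congrArg Subtype.val heq
    have hgu' : g u = u := hgu
    have hg'u' : g' u = u := hg'u
    have hk : g'⁻¹ * g = 1 := by
      apply hker _ (N.mul_mem (N.inv_mem hg'N) hgN)
      · rw [Equiv.Perm.mul_apply, hgu']
        exact g'.injective (by rw [perm_apply_inv_self, hg'u'])
      · intro y hy
        have h1 : (localPerm Γ (hNaut hgN) hgu ⟨y, hy⟩ : V) = g y := rfl
        rw [heq'] at h1
        have h2 : (localPerm Γ (hNaut hg'N) hg'u ⟨y, hy⟩ : V) = g' y := rfl
        rw [h2] at h1
        rw [Equiv.Perm.mul_apply, ← h1]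
        simp
    have hgg : g = g' := by
      have h3 := congrArg (fun k => g' * k) hk
      simpa [mul_assoc] using h3
    apply Subtype.ext
    apply Subtype.ext
    exact hgg
  · rintro ⟨σ, hσ⟩
    obtain ⟨g, hg, hgu, hcoe⟩ := hσ
    refine ⟨⟨⟨g, hg⟩, hgu⟩, ?_⟩
    apply Subtype.ext
    apply Equiv.ext
    intro y
    apply Subtype.ext
    exact (hcoe y).symm

lemma card_group_eq_vertexStab [Fintype V] {N : Subgroup (Equiv.Perm V)}
    (hVT : VertexTransitive Γ N) (u : V) :
    Nat.card N = Fintype.card V * Nat.card (MulAction.stabilizer N u) := by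
  have horb : MulAction.orbit N u = Set.univ := by
    apply Set.eq_univ_of_forall
    intro y
    obtain ⟨g, hg, hgy⟩ := hVT u y
    exact ⟨⟨g, hg⟩, hgy⟩
  have hcongr := Nat.card_congr (MulAction.orbitProdStabilizerEquivGroup N u)
  rw [Nat.card_prod] at hcongr
  rw [← hcongr, horb]
  congr 1
  rw [Nat.card_coe_set_eq, Set.ncard_univ, Nat.card_eq_fintype_card]

end Statement18Aux9b

section Statement18Aux10

open Equiv

variable {V : Type*} {Γ : SimpleGraph V} {M : Subgroup (Equiv.Perm V)} {a b : V}

lemma localGroup_M_maps_in (hM : HalfArcTransitive Γ M) (hab : Γ.Adj a b) {u : V}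
    {σ : Equiv.Perm (Γ.neighborSet u)} (hσ : σ ∈ localGroup Γ M u)
    {x : Γ.neighborSet u} (hx : (x : V) ∈ inSet M a b u) : (σ x : V) ∈ inSet M a b u := by
  obtain ⟨g, hg, hgu, hcoe⟩ := hσ
  rw [hcoe x]
  have := arcOrbit_smul hg hx
  rwa [hgu] at this

lemma exists_out_swap [Fintype V] (hM : HalfArcTransitive Γ M) (hab : Γ.Adj a b)
    (htetra : Tetravalent Γ) {w : V} (hMcard : Nat.card (localGroup Γ M w) = 4)
    {p₁ p₂ : V} (hout : outSet M a b w = {p₁, p₂}) (hpne : p₁ ≠ p₂) :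
    ∃ g ∈ M, g w = w ∧ g p₁ = p₂ ∧ g p₂ = p₁ ∧ ∀ y ∈ inSet M a b w, g y = y := by
  classical
  obtain ⟨q₁, q₂, hqne, hin⟩ := Set.ncard_eq_two.mp (out_in_card hM hab htetra w).2
  have hp₁o : p₁ ∈ outSet M a b w := by rw [hout]; left; rfl
  have hp₂o : p₂ ∈ outSet M a b w := by rw [hout]; right; rfl
  have hq₁i : q₁ ∈ inSet M a b w := by rw [hin]; left; rfl
  have hq₂i : q₂ ∈ inSet M a b w := by rw [hin]; right; rfl
  have hp₁n := outSet_subset_nbr hM.1 hab w hp₁o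
  have hp₂n := outSet_subset_nbr hM.1 hab w hp₂o
  have hq₁n := inSet_subset_nbr hM.1 hab w hq₁i
  have hq₂n := inSet_subset_nbr hM.1 hab w hq₂i
  set Y := Γ.neighborSet w
  set P := localGroup Γ M w with hP
  set pa : Y := ⟨p₁, hp₁n⟩
  set pb : Y := ⟨p₂, hp₂n⟩
  set qa : Y := ⟨q₁, hq₁n⟩
  set qb : Y := ⟨q₂, hq₂n⟩
  have pairout : ∀ ρ : P, ((ρ.1 pa : V) = p₁ ∧ (ρ.1 pb : V) = p₂)
      ∨ ((ρ.1 pa : V) = p₂ ∧ (ρ.1 pb : V) = p₁) := by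
    intro ρ
    have h1 : (ρ.1 pa : V) ∈ outSet M a b w := localGroup_M_maps_out hM hab ρ.2 hp₁o
    have h2 : (ρ.1 pb : V) ∈ outSet M a b w := localGroup_M_maps_out hM hab ρ.2 hp₂o
    rw [hout] at h1 h2
    have hne12 : (ρ.1 pa : V) ≠ (ρ.1 pb : V) := by
      intro hc
      have : pa = pb := ρ.1.injective (Subtype.ext hc)
      exact hpne (congrArg Subtype.val this)
    rcases h1 with h1 | h1 <;> rcases h2 with h2 | h2
    · exact absurd (h1.trans h2.symm) hne12
    · exact Or.inl ⟨h1, h2⟩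
    · exact Or.inr ⟨h1, h2⟩
    · exact absurd (h1.trans h2.symm) hne12
  have pairin : ∀ ρ : P, ((ρ.1 qa : V) = q₁ ∧ (ρ.1 qb : V) = q₂)
      ∨ ((ρ.1 qa : V) = q₂ ∧ (ρ.1 qb : V) = q₁) := by
    intro ρ
    have h1 : (ρ.1 qa : V) ∈ inSet M a b w := localGroup_M_maps_in hM hab ρ.2 hq₁i
    have h2 : (ρ.1 qb : V) ∈ inSet M a b w := localGroup_M_maps_in hM hab ρ.2 hq₂i
    rw [hin] at h1 h2
    have hne12 : (ρ.1 qa : V) ≠ (ρ.1 qb : V) := by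
      intro hc
      have : qa = qb := ρ.1.injective (Subtype.ext hc)
      exact hqne (congrArg Subtype.val this)
    rcases h1 with h1 | h1 <;> rcases h2 with h2 | h2
    · exact absurd (h1.trans h2.symm) hne12
    · exact Or.inl ⟨h1, h2⟩
    · exact Or.inr ⟨h1, h2⟩
    · exact absurd (h1.trans h2.symm) hne12
  have det : ∀ ρ τ : P, ((ρ.1 pa : V) = p₁ ↔ (τ.1 pa : V) = p₁) →
      ((ρ.1 qa : V) = q₁ ↔ (τ.1 qa : V) = q₁) → ρ = τ := by
    intro ρ τ hiff1 hiff2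
    have hval : ∀ y : Y, (ρ.1 y : V) = (τ.1 y : V) := by
      intro y
      have hy : (y : V) ∈ outSet M a b w ∪ inSet M a b w := by
        rw [out_union_in hM hab w]
        exact y.2
      have hcase : y = pa ∨ y = pb ∨ y = qa ∨ y = qb := by
        rcases hy with hy | hy
        · rw [hout] at hy
          rcases hy with hy | hy
          · exact Or.inl (Subtype.ext hy)
          · exact Or.inr (Or.inl (Subtype.ext hy))
        · rw [hin] at hy
          rcases hy with hy | hy
          · exact Or.inr (Or.inr (Or.inl (Subtype.ext hy)))
          · exact Or.inr (Or.inr (Or.inr (Subtype.ext hy)))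
      have houtpair : ((ρ.1 pa : V) = p₁ ∧ (ρ.1 pb : V) = p₂ ∧ (τ.1 pa : V) = p₁ ∧
          (τ.1 pb : V) = p₂) ∨ ((ρ.1 pa : V) = p₂ ∧ (ρ.1 pb : V) = p₁ ∧
          (τ.1 pa : V) = p₂ ∧ (τ.1 pb : V) = p₁) := by
        rcases pairout ρ with h1 | h1 <;> rcases pairout τ with h2 | h2
        · exact Or.inl ⟨h1.1, h1.2, h2.1, h2.2⟩
        · exact absurd (hiff1.mp h1.1) (by rw [h2.1]; exact Ne.symm hpne)
        · exact absurd (hiff1.mpr h2.1) (by rw [h1.1]; exact Ne.symm hpne)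
        · exact Or.inr ⟨h1.1, h1.2, h2.1, h2.2⟩
      have hinpair : ((ρ.1 qa : V) = q₁ ∧ (ρ.1 qb : V) = q₂ ∧ (τ.1 qa : V) = q₁ ∧
          (τ.1 qb : V) = q₂) ∨ ((ρ.1 qa : V) = q₂ ∧ (ρ.1 qb : V) = q₁ ∧
          (τ.1 qa : V) = q₂ ∧ (τ.1 qb : V) = q₁) := by
        rcases pairin ρ with h1 | h1 <;> rcases pairin τ with h2 | h2
        · exact Or.inl ⟨h1.1, h1.2, h2.1, h2.2⟩
        · exact absurd (hiff2.mp h1.1) (by rw [h2.1]; exact Ne.symm hqne)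
        · exact absurd (hiff2.mpr h2.1) (by rw [h1.1]; exact Ne.symm hqne)
        · exact Or.inr ⟨h1.1, h1.2, h2.1, h2.2⟩
      rcases hcase with rfl | rfl | rfl | rfl
      · rcases houtpair with h | h
        · rw [h.1, h.2.2.1]
        · rw [h.1, h.2.2.1]
      · rcases houtpair with h | h
        · rw [h.2.1, h.2.2.2]
        · rw [h.2.1, h.2.2.2]
      · rcases hinpair with h | h
        · rw [h.1, h.2.2.1]
        · rw [h.1, h.2.2.1]
      · rcases hinpair with h | h
        · rw [h.2.1, h.2.2.2]
        · rw [h.2.1, h.2.2.2]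
    apply Subtype.ext
    apply Equiv.ext
    intro y
    exact Subtype.ext (hval y)
  set sig : P → Bool × Bool :=
    fun ρ => (decide ((ρ.1 pa : V) = p₁), decide ((ρ.1 qa : V) = q₁)) with hsig
  have hinj : Function.Injective sig := by
    intro ρ τ heq
    rw [Prod.ext_iff] at heq
    apply det
    · rw [← decide_eq_decide]
      exact heq.1
    · rw [← decide_eq_decide]
      exact heq.2
  have hbij : Function.Bijective sig := by
    rw [Nat.bijective_iff_injective_and_card]
    refine ⟨hinj, ?_⟩
    rw [hMcard, Nat.card_eq_fintype_card]
    simp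
  obtain ⟨ρ, hρ⟩ := hbij.2 (false, true)
  have h1 : (ρ.1 pa : V) ≠ p₁ := by
    have := congrArg Prod.fst hρ
    simp only [hsig] at this
    exact of_decide_eq_false this
  have h2 : (ρ.1 qa : V) = q₁ := by
    have := congrArg Prod.snd hρ
    simp only [hsig] at this
    exact of_decide_eq_true this
  have hout1 : (ρ.1 pa : V) = p₂ := by
    rcases pairout ρ with h | h
    · exact absurd h.1 h1
    · exact h.1
  have hout2 : (ρ.1 pb : V) = p₁ := by
    rcases pairout ρ with h | h
    · exact absurd h.1 h1
    · exact h.2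
  have hin2 : (ρ.1 qb : V) = q₂ := by
    rcases pairin ρ with h | h
    · exact h.2
    · exact absurd h.1 (by rw [h2] at *; intro hc; exact hqne (h2.symm.trans h.1))
  obtain ⟨g, hg, hgw, hcoe⟩ := ρ.2
  refine ⟨g, hg, hgw, ?_, ?_, ?_⟩
  · rw [← hcoe pa]
    exact hout1
  · rw [← hcoe pb]
    exact hout2
  · intro y hy
    rw [hin] at hy
    rcases hy with rfl | rfl
    · rw [← hcoe qa]
      exact h2
    · rw [← hcoe qb]
      exact hin2

end Statement18Aux10

section Statement18Aux11

open Equiv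

variable {V : Type*} {Γ : SimpleGraph V} {M H : Subgroup (Equiv.Perm V)} {a b : V}

lemma image_nbr {g : Equiv.Perm V} (hg : g ∈ autGroup Γ) (w : V) :
    g '' Γ.neighborSet w = Γ.neighborSet (g w) := by
  ext y
  constructor
  · rintro ⟨x, hx, rfl⟩
    exact (aut_adj hg w x).mpr hx
  · intro hy
    refine ⟨g⁻¹ y, ?_, by simp⟩
    have : Γ.Adj (g w) (g (g⁻¹ y)) := by simpa using hy
    rw [aut_adj hg] at this
    exact this

lemma no_mixed [Fintype V] (hM : HalfArcTransitive Γ M) (hab : Γ.Adj a b)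
    (htetra : Tetravalent Γ) (hHaut : H ≤ autGroup Γ) (hMH : M ≤ H)
    (hM4 : ∀ w : V, Nat.card (localGroup Γ M w) = 4)
    (hH8 : ∀ w : V, Nat.card (localGroup Γ H w) = 8)
    {h : Equiv.Perm V} (hh : h ∈ H) (w : V) {p₁ p₂ : V}
    (hout : outSet M a b w = {p₁, p₂}) (hpne : p₁ ≠ p₂)
    (hm1 : h p₁ ∈ outSet M a b (h w)) (hm2 : h p₂ ∉ outSet M a b (h w)) : False := by
  classical
  set x := h w with hx
  set α := h p₁ with hα
  set β := h p₂ with hβ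
  have hp₁o : p₁ ∈ outSet M a b w := by rw [hout]; left; rfl
  have hp₂o : p₂ ∈ outSet M a b w := by rw [hout]; right; rfl
  have hp₁n := outSet_subset_nbr hM.1 hab w hp₁o
  have hp₂n := outSet_subset_nbr hM.1 hab w hp₂o
  have hβn : β ∈ Γ.neighborSet x := by
    rw [hβ, hx]
    exact (aut_adj (hHaut hh) w p₂).mpr hp₂n
  have hβin : β ∈ inSet M a b x := by
    have := out_union_in hM hab x
    have hmem : β ∈ outSet M a b x ∪ inSet M a b x := by rw [this]; exact hβn
    rcases hmem with hc | hc
    · exact absurd hc hm2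
    · exact hc
  -- the second out-neighbour c of x
  obtain ⟨o₁, o₂, hone, houtx⟩ := Set.ncard_eq_two.mp (out_in_card hM hab htetra x).1
  have houtx2 : ∃ c, c ≠ α ∧ outSet M a b x = {α, c} := by
    have hm1' : α ∈ ({o₁, o₂} : Set V) := by rw [← houtx]; exact hm1
    rcases hm1' with rfl | rfl
    · exact ⟨o₂, Ne.symm hone, houtx⟩
    · refine ⟨o₁, hone, by rw [houtx, Set.pair_comm]⟩
  obtain ⟨c, hcα, houtx'⟩ := houtx2
  have hco : c ∈ outSet M a b x := by rw [houtx']; right; rfl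
  -- the second in-neighbour d of x
  obtain ⟨i₁, i₂, hine, hinx⟩ := Set.ncard_eq_two.mp (out_in_card hM hab htetra x).2
  have hinx2 : ∃ d, d ≠ β ∧ inSet M a b x = {β, d} := by
    have hm1' : β ∈ ({i₁, i₂} : Set V) := by rw [← hinx]; exact hβin
    rcases hm1' with rfl | rfl
    · exact ⟨i₂, Ne.symm hine, hinx⟩
    · refine ⟨i₁, hine, by rw [hinx, Set.pair_comm]⟩
  obtain ⟨d, hdβ, hinx'⟩ := hinx2
  have hdi : d ∈ inSet M a b x := by rw [hinx']; right; rfl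
  have hdisj := out_disjoint_in hM hab x
  have hαβ : α ≠ β := fun hc => (hdisj.le_bot ⟨hm1, hc ▸ hβin⟩)
  have hαd : α ≠ d := fun hc => (hdisj.le_bot ⟨hm1, hc ▸ hdi⟩)
  have hcβ : c ≠ β := fun hc => (hdisj.le_bot ⟨hco, hc ▸ hβin⟩)
  have hcd : c ≠ d := fun hc => (hdisj.le_bot ⟨hco, hc ▸ hdi⟩)
  -- c and d are images of in-neighbours of w
  have himg := image_nbr (hHaut hh) w
  have hpre : ∀ z ∈ Γ.neighborSet x, ∃ r ∈ Γ.neighborSet w, h r = z := by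
    intro z hz
    rw [hx, ← himg] at hz
    obtain ⟨r, hr, hrz⟩ := hz
    exact ⟨r, hr, hrz⟩
  obtain ⟨r, hrn, hrc⟩ := hpre c (outSet_subset_nbr hM.1 hab x hco)
  obtain ⟨s, hsn, hsd⟩ := hpre d (inSet_subset_nbr hM.1 hab x hdi)
  have hrin : r ∈ inSet M a b w := by
    have : r ∈ outSet M a b w ∪ inSet M a b w := by rw [out_union_in hM hab w]; exact hrn
    rcases this with hc | hc
    · rw [hout] at hc
      rcases hc with hc | hc
      · exact absurd (show c = α by rw [← hrc, hc]) hcα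
      · exact absurd (show c = β by rw [← hrc, hc]) hcβ
    · exact hc
  have hsin : s ∈ inSet M a b w := by
    have : s ∈ outSet M a b w ∪ inSet M a b w := by rw [out_union_in hM hab w]; exact hsn
    rcases this with hc | hc
    · rw [hout] at hc
      rcases hc with hc | hc
      · exact absurd (show d = α by rw [← hsd, hc]) (Ne.symm hαd)
      · exact absurd (show d = β by rw [← hsd, hc]) hdβ
    · exact hc
  -- swap at w
  obtain ⟨g₀, hg₀M, hg₀w, hg₀p₁, hg₀p₂, hg₀in⟩ :=
    exists_out_swap hM hab htetra (hM4 w) hout hpne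
  set k := h * g₀ * h⁻¹ with hk
  have hkH : k ∈ H := H.mul_mem (H.mul_mem hh (hMH hg₀M)) (H.inv_mem hh)
  have hkx : k x = x := by
    rw [hk, hx]
    simp only [Equiv.Perm.mul_apply]
    rw [perm_inv_apply_self, hg₀w]
  have hkα : k α = β := by
    rw [hk, hα, hβ]
    simp only [Equiv.Perm.mul_apply]
    rw [perm_inv_apply_self, hg₀p₁]
  have hkβ : k β = α := by
    rw [hk, hα, hβ]
    simp only [Equiv.Perm.mul_apply]
    rw [perm_inv_apply_self, hg₀p₂]
  have hkc : k c = c := by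
    rw [hk, ← hrc]
    simp only [Equiv.Perm.mul_apply]
    rw [perm_inv_apply_self, hg₀in r hrin]
  have hkd : k d = d := by
    rw [hk, ← hsd]
    simp only [Equiv.Perm.mul_apply]
    rw [perm_inv_apply_self, hg₀in s hsin]
  -- swap at x
  obtain ⟨g₁, hg₁M, hg₁x, hg₁α, hg₁c, hg₁in⟩ :=
    exists_out_swap hM hab htetra (hM4 x) houtx' hcα.symm
  set γ := k * g₁ with hγ
  have hγH : γ ∈ H := H.mul_mem hkH (hMH hg₁M)
  have hγx : γ x = x := by
    rw [hγ]
    simp only [Equiv.Perm.mul_apply]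
    rw [hg₁x, hkx]
  have hγα : γ α = c := by
    rw [hγ]
    simp only [Equiv.Perm.mul_apply]
    rw [hg₁α, hkc]
  have hγc : γ c = β := by
    rw [hγ]
    simp only [Equiv.Perm.mul_apply]
    rw [hg₁c, hkα]
  have hγβ : γ β = α := by
    rw [hγ]
    simp only [Equiv.Perm.mul_apply]
    rw [hg₁in β hβin, hkβ]
  have hγd : γ d = d := by
    rw [hγ]
    simp only [Equiv.Perm.mul_apply]
    rw [hg₁in d hdi, hkd]
  set π := localPerm Γ (hHaut hγH) hγx with hπ
  have hπmem : π ∈ localGroup Γ H x := localPerm_mem hHaut hγH hγx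
  have hπval : ∀ z : Γ.neighborSet x, (π z : V) = γ (z : V) := fun z => rfl
  have hπ3 : π ^ 3 = 1 := by
    apply Equiv.ext
    intro y
    have hpow : (π ^ 3) y = π (π (π y)) := by
      rw [pow_succ, pow_succ, pow_one, Equiv.Perm.mul_apply, Equiv.Perm.mul_apply]
    apply Subtype.ext
    rw [hpow]
    have hchain : (π (π (π y)) : V) = γ (γ (γ (y : V))) := by
      rw [hπval, hπval, hπval]
    rw [hchain]
    simp only [Equiv.Perm.one_apply]
    have hcase : (y : V) = α ∨ (y : V) = c ∨ (y : V) = β ∨ (y : V) = d := by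
      have : (y : V) ∈ outSet M a b x ∪ inSet M a b x := by
        rw [out_union_in hM hab x]
        exact y.2
      rcases this with hc | hc
      · rw [houtx'] at hc
        rcases hc with hc | hc
        · exact Or.inl hc
        · exact Or.inr (Or.inl hc)
      · rw [hinx'] at hc
        rcases hc with hc | hc
        · exact Or.inr (Or.inr (Or.inl hc))
        · exact Or.inr (Or.inr (Or.inr hc))
    rcases hcase with hc | hc | hc | hc <;> rw [hc]
    · rw [hγα, hγc, hγβ]
    · rw [hγc, hγβ, hγα]
    · rw [hγβ, hγα, hγc]
    · rw [hγd, hγd, hγd]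
  have hπne : π ≠ 1 := by
    intro hc
    have h1 : (π ⟨α, outSet_subset_nbr hM.1 hab x hm1⟩ : V) = γ α := rfl
    rw [hc] at h1
    simp only [Equiv.Perm.one_apply] at h1
    rw [hγα] at h1
    exact hcα h1.symm
  have hord : orderOf π = 3 := orderOf_eq_prime hπ3 hπne
  have hdvd := Subgroup.orderOf_dvd_natCard (localGroup Γ H x) hπmem
  rw [hord, hH8 x] at hdvd
  norm_num at hdvd

lemma image_out_cases [Fintype V] (hM : HalfArcTransitive Γ M) (hab : Γ.Adj a b)
    (htetra : Tetravalent Γ) (hHaut : H ≤ autGroup Γ) (hMH : M ≤ H)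
    (hM4 : ∀ w : V, Nat.card (localGroup Γ M w) = 4)
    (hH8 : ∀ w : V, Nat.card (localGroup Γ H w) = 8)
    {h : Equiv.Perm V} (hh : h ∈ H) (w : V) :
    h '' outSet M a b w = outSet M a b (h w) ∨ h '' outSet M a b w = inSet M a b (h w) := by
  classical
  obtain ⟨p₁, p₂, hpne, hout⟩ := Set.ncard_eq_two.mp (out_in_card hM hab htetra w).1
  have hA : h '' outSet M a b w = {h p₁, h p₂} := by
    rw [hout, Set.image_pair]
  by_cases hm1 : h p₁ ∈ outSet M a b (h w) <;> by_cases hm2 : h p₂ ∈ outSet M a b (h w)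
  · left
    have hsub : h '' outSet M a b w ⊆ outSet M a b (h w) := by
      rw [hA]
      rintro z (rfl | rfl)
      · exact hm1
      · exact hm2
    apply Set.eq_of_subset_of_ncard_le hsub _ (Set.toFinite _)
    rw [(out_in_card hM hab htetra (h w)).1,
      Set.ncard_image_of_injective _ h.injective, (out_in_card hM hab htetra w).1]
  · exact (no_mixed hM hab htetra hHaut hMH hM4 hH8 hh w hout hpne hm1 hm2).elim
  · exact (no_mixed hM hab htetra hHaut hMH hM4 hH8 hh w
      (by rw [hout, Set.pair_comm]) (Ne.symm hpne) hm2 hm1).elim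
  · right
    have hsub : h '' outSet M a b w ⊆ inSet M a b (h w) := by
      rw [hA]
      have hmem : ∀ z ∈ ({h p₁, h p₂} : Set V), z ∈ inSet M a b (h w) := by
        intro z hz
        have hzn : z ∈ Γ.neighborSet (h w) := by
          rw [← image_nbr (hHaut hh) w]
          rcases hz with rfl | rfl
          · exact ⟨p₁, outSet_subset_nbr hM.1 hab w (by rw [hout]; left; rfl), rfl⟩
          · exact ⟨p₂, outSet_subset_nbr hM.1 hab w (by rw [hout]; right; rfl), rfl⟩
        have : z ∈ outSet M a b (h w) ∪ inSet M a b (h w) := by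
          rw [out_union_in hM hab (h w)]
          exact hzn
        rcases this with hc | hc
        · rcases hz with rfl | rfl
          · exact (hm1 hc).elim
          · exact (hm2 hc).elim
        · exact hc
      exact hmem
    apply Set.eq_of_subset_of_ncard_le hsub _ (Set.toFinite _)
    rw [(out_in_card hM hab htetra (h w)).2,
      Set.ncard_image_of_injective _ h.injective, (out_in_card hM hab htetra w).1]

end Statement18Aux11

section Statement18Aux12

open Equiv

variable {V : Type*} {Γ : SimpleGraph V} {M H : Subgroup (Equiv.Perm V)} {a b : V}

/-- `h` preserves the `M`-orientation. -/
def OPres (M : Subgroup (Equiv.Perm V)) (a b : V) (h : Equiv.Perm V) : Prop :=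
  ∀ y z : V, (y, z) ∈ arcOrbit M a b ↔ (h y, h z) ∈ arcOrbit M a b

/-- `h` reverses the `M`-orientation. -/
def ORev (M : Subgroup (Equiv.Perm V)) (a b : V) (h : Equiv.Perm V) : Prop :=
  ∀ y z : V, (y, z) ∈ arcOrbit M a b ↔ (h z, h y) ∈ arcOrbit M a b

lemma opres_inv {h : Equiv.Perm V} (hp : OPres M a b h) : OPres M a b h⁻¹ := by
  intro y z
  have := hp (h⁻¹ y) (h⁻¹ z)
  simp only [perm_apply_inv_self] at this
  exact this.symm

lemma orev_inv {h : Equiv.Perm V} (hp : ORev M a b h) : ORev M a b h⁻¹ := by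
  intro y z
  have := hp (h⁻¹ z) (h⁻¹ y)
  simp only [perm_apply_inv_self] at this
  exact this.symm

lemma opres_dichotomy [Fintype V] (hconn : Γ.Connected) (hM : HalfArcTransitive Γ M)
    (hab : Γ.Adj a b) (htetra : Tetravalent Γ) (hHaut : H ≤ autGroup Γ) (hMH : M ≤ H)
    (hM4 : ∀ w : V, Nat.card (localGroup Γ M w) = 4)
    (hH8 : ∀ w : V, Nat.card (localGroup Γ H w) = 8)
    {h : Equiv.Perm V} (hh : h ∈ H) : OPres M a b h ∨ ORev M a b h := by
  classical
  set P : V → Prop := fun w => h '' outSet M a b w = outSet M a b (h w) with hPdef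
  have hQ := fun w => image_out_cases hM hab htetra hHaut hMH hM4 hH8 hh (w := w)
  have himgmem : ∀ w y, y ∈ outSet M a b w → h y ∈ h '' outSet M a b w :=
    fun w y hy => ⟨y, hy, rfl⟩
  -- one directed step
  have hstep1 : ∀ w y : V, (w, y) ∈ arcOrbit M a b → P w → P y := by
    intro w y harc hPw
    have hwy : h w ∈ inSet M a b (h y) := by
      have : h y ∈ outSet M a b (h w) := by
        rw [← hPw]
        exact himgmem w y harc
      exact this
    rcases hQ y with hc | hc
    · exact hc
    · exfalso
      have : h w ∈ h '' outSet M a b y := by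
        rw [hc]
        exact hwy
      obtain ⟨t, ht, hth⟩ := this
      have : t = w := h.injective hth
      rw [this] at ht
      exact exists_swap_of_not_disjoint hM hab harc ht
  have hstep2 : ∀ w y : V, (w, y) ∈ arcOrbit M a b → P y → P w := by
    intro w y harc hPy
    rcases hQ w with hc | hc
    · exact hc
    · exfalso
      have h1 : h y ∈ inSet M a b (h w) := by
        have : h y ∈ h '' outSet M a b w := himgmem w y harc
        rw [hc] at this
        exact this
      have h2 : h w ∈ inSet M a b (h y) := by
        have hwn : h w ∈ Γ.neighborSet (h y) := by
          rw [← image_nbr (hHaut hh) y]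
          exact ⟨w, (arcOrbit_adj hM.1 hab harc).symm, rfl⟩
        have := out_union_in hM hab (h y)
        have hmem : h w ∈ outSet M a b (h y) ∪ inSet M a b (h y) := by rw [this]; exact hwn
        rcases hmem with hc2 | hc2
        · exfalso
          rw [← hPy] at hc2
          obtain ⟨t, ht, hth⟩ := hc2
          have : t = w := h.injective hth
          rw [this] at ht
          exact exists_swap_of_not_disjoint hM hab harc ht
        · exact hc2
      exact exists_swap_of_not_disjoint hM hab h1 h2
  have hstepiff : ∀ w y : V, Γ.Adj w y → (P w ↔ P y) := by
    intro w y hadj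
    rcases arcOrbit_cover hM hab hadj with harc | harc
    · exact ⟨hstep1 w y harc, hstep2 w y harc⟩
    · exact ⟨hstep2 y w harc, hstep1 y w harc⟩
  have hconst : ∀ w, P w ↔ P a :=
    connected_ind hconn (fun w => (P w ↔ P a)) a Iff.rfl
      (fun x y hxy hx => (hstepiff x y hxy).symm.trans hx)
  by_cases hPa : P a
  · left
    have hall : ∀ w, P w := fun w => (hconst w).mpr hPa
    intro y z
    constructor
    · intro hyz
      have : h z ∈ outSet M a b (h y) := by
        rw [← hall y]
        exact himgmem y z hyz
      exact this
    · intro hyz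
      have hadj : Γ.Adj y z := by
        have := arcOrbit_adj hM.1 hab hyz
        rwa [aut_adj (hHaut hh)] at this
      rcases arcOrbit_cover hM hab hadj with harc | harc
      · exact harc
      · exfalso
        have : h y ∈ outSet M a b (h z) := by
          rw [← hall z]
          exact himgmem z y harc
        exact exists_swap_of_not_disjoint hM hab hyz this
  · right
    have hall : ∀ w, ¬ P w := fun w hc => hPa ((hconst w).mp hc)
    have hallin : ∀ w, h '' outSet M a b w = inSet M a b (h w) := by
      intro w
      rcases hQ w with hc | hc
      · exact absurd hc (hall w)
      · exact hc
    intro y z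
    constructor
    · intro hyz
      have : h z ∈ inSet M a b (h y) := by
        rw [← hallin y]
        exact himgmem y z hyz
      exact this
    · intro hyz
      have hadj : Γ.Adj y z := by
        have := (arcOrbit_adj hM.1 hab hyz).symm
        rwa [aut_adj (hHaut hh)] at this
      rcases arcOrbit_cover hM hab hadj with harc | harc
      · exact harc
      · exfalso
        have : h y ∈ inSet M a b (h z) := by
          rw [← hallin z]
          exact himgmem z y harc
        exact exists_swap_of_not_disjoint hM hab this hyz
 
lemma caseB_normal [Fintype V] (hconn : Γ.Connected) (hM : HalfArcTransitive Γ M)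
    (hab : Γ.Adj a b) (htetra : Tetravalent Γ) (hHaut : H ≤ autGroup Γ)
    (hAT : ArcTransitive Γ H) (hmax : IsMaximalSubgroup M H)
    (hM4 : ∀ w : V, Nat.card (localGroup Γ M w) = 4)
    (hH8 : ∀ w : V, Nat.card (localGroup Γ H w) = 8) : NormalIn M H := by
  classical
  have hMH : M ≤ H := le_of_lt hmax.1
  set Hplus : Subgroup (Equiv.Perm V) :=
    { carrier := {h | h ∈ H ∧ OPres M a b h}
      one_mem' := ⟨H.one_mem, fun y z => by simp⟩
      mul_mem' := by
        rintro g k ⟨hgH, hgp⟩ ⟨hkH, hkp⟩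
        refine ⟨H.mul_mem hgH hkH, fun y z => ?_⟩
        rw [Equiv.Perm.mul_apply, Equiv.Perm.mul_apply]
        exact (hkp y z).trans (hgp (k y) (k z))
      inv_mem' := by
        rintro g ⟨hgH, hgp⟩
        exact ⟨H.inv_mem hgH, opres_inv hgp⟩ } with hHp
  have hMle : M ≤ Hplus := by
    intro m hm
    refine ⟨hMH hm, fun y z => (arcOrbit_smul_iff hm).symm⟩
  have hHple : Hplus ≤ H := fun g hg => hg.1
  have hne : Hplus ≠ H := by
    intro hc
    obtain ⟨g, hgH, hga, hgb⟩ := hAT a b b a hab hab.symm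
    have hgp : OPres M a b g := by
      rw [← hc] at hgH
      exact hgH.2
    have h1 : (b, a) ∈ arcOrbit M a b := by
      have := (hgp a b).mp (self_mem_arcOrbit M a b)
      rwa [hga, hgb] at this
    exact exists_swap_of_not_disjoint hM hab (self_mem_arcOrbit M a b) h1
  have hHpM : Hplus = M := by
    rcases hmax.2 Hplus hMle hHple with hc | hc
    · exact hc
    · exact absurd hc hne
  intro h hh m hm
  have hdich := opres_dichotomy hconn hM hab htetra hHaut hMH hM4 hH8 hh
  have hmp : OPres M a b m := (hMle hm).2
  have key : OPres M a b (h * m * h⁻¹) := by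
    rcases hdich with hp | hp
    · have hpi := opres_inv hp
      intro y z
      simp only [Equiv.Perm.mul_apply]
      exact (hpi y z).trans ((hmp _ _).trans (hp _ _))
    · have hpi := orev_inv hp
      intro y z
      simp only [Equiv.Perm.mul_apply]
      exact (hpi y z).trans ((hmp _ _).trans (hp _ _))
  rw [← hHpM]
  exact ⟨H.mul_mem (H.mul_mem hh (hMH hm)) (H.inv_mem hh), key⟩

end Statement18Aux12

section Statement18Aux13

open Equiv

/-- The basic 4-cycle in `Perm (Fin 4)`. -/
def r0 : Equiv.Perm (Fin 4) := finRotate 4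

/-- A reflection in `Perm (Fin 4)`. -/
def s0 : Equiv.Perm (Fin 4) := Equiv.swap 0 2

lemma r0_pow4 : r0 ^ 4 = 1 := by decide
lemma s0_sq : s0 * s0 = 1 := by decide
lemma s0r0 : r0 * s0 = s0 * r0 ^ 3 := by decide

lemma pow_mod_four {G : Type*} [Group G] {x : G} (hx : x ^ 4 = 1) (m : ℕ) :
    x ^ m = x ^ (m % 4) := by
  conv_lhs => rw [← Nat.div_add_mod m 4]
  rw [pow_add, pow_mul, hx, one_pow, one_mul]

lemma r0_pow_congr {m k : ℕ} (h : m % 4 = k % 4) : r0 ^ m = r0 ^ k := by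
  rw [pow_mod_four r0_pow4 m, pow_mod_four r0_pow4 k, h]

lemma r0_comm (n : ℕ) : r0 ^ n * s0 = s0 * r0 ^ (3 * n) := by
  induction n with
  | zero => simp
  | succ k ih =>
    rw [pow_succ, mul_assoc, s0r0, ← mul_assoc, ih, mul_assoc, ← pow_add]
    congr 1 <;> omega

/-- The canonical embedding of `D₈` into `Perm (Fin 4)`. -/
def dihToPerm : DihedralGroup 4 →* Equiv.Perm (Fin 4) where
  toFun := fun x => match x with
    | DihedralGroup.r i => r0 ^ i.val
    | DihedralGroup.sr i => s0 * r0 ^ i.val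
  map_one' := by
    show r0 ^ (0 : ZMod 4).val = 1
    rw [ZMod.val_zero, pow_zero]
  map_mul' := by
    rintro (i | i) (j | j)
    · show r0 ^ (i + j).val = r0 ^ i.val * r0 ^ j.val
      rw [← pow_add]
      apply r0_pow_congr
      have := ZMod.val_add i j
      omega
    · show s0 * r0 ^ (j - i).val = r0 ^ i.val * (s0 * r0 ^ j.val)
      rw [← mul_assoc, r0_comm, mul_assoc, ← pow_add]
      congr 1
      apply r0_pow_congr
      have h1 : j - i = j + 3 * i := by
        have h2 : (3 : ZMod 4) = -1 := by decide
        rw [h2]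
        ring
      rw [h1, ZMod.val_add]
      have h3 := ZMod.val_mul (3 : ZMod 4) i
      have h4 : (3 : ZMod 4).val = 3 := by decide
      rw [h4] at h3
      omega
    · show s0 * r0 ^ (i + j).val = (s0 * r0 ^ i.val) * r0 ^ j.val
      rw [mul_assoc, ← pow_add]
      congr 1
      apply r0_pow_congr
      have := ZMod.val_add i j
      omega
    · show r0 ^ (j - i).val = (s0 * r0 ^ i.val) * (s0 * r0 ^ j.val)
      rw [mul_assoc, ← mul_assoc (r0 ^ i.val), r0_comm, mul_assoc, ← pow_add, ← mul_assoc,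
        s0_sq, one_mul]
      apply r0_pow_congr
      have h1 : j - i = j + 3 * i := by
        have h2 : (3 : ZMod 4) = -1 := by decide
        rw [h2]
        ring
      rw [h1, ZMod.val_add]
      have h3 := ZMod.val_mul (3 : ZMod 4) i
      have h4 : (3 : ZMod 4).val = 3 := by decide
      rw [h4] at h3
      omega

lemma dihToPerm_inj : Function.Injective dihToPerm := by
  rw [injective_iff_map_eq_one]
  rintro (i | i) h
  · change r0 ^ i.val = 1 at h
    have hlt := ZMod.val_lt i
    have h0 : i.val = 0 ∨ i.val = 1 ∨ i.val = 2 ∨ i.val = 3 := by omega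
    have hval0 : i.val = 0 := by
      rcases h0 with h0 | h0 | h0 | h0
      · exact h0
      · rw [h0] at h; exact absurd h (by decide)
      · rw [h0] at h; exact absurd h (by decide)
      · rw [h0] at h; exact absurd h (by decide)
    have : i = 0 := (ZMod.val_eq_zero i).mp hval0
    rw [this, ← DihedralGroup.one_def]
  · exfalso
    change s0 * r0 ^ i.val = 1 at h
    have hlt := ZMod.val_lt i
    have h0 : i.val = 0 ∨ i.val = 1 ∨ i.val = 2 ∨ i.val = 3 := by omega
    rcases h0 with h0 | h0 | h0 | h0 <;> rw [h0] at h <;> exact absurd h (by decide)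

/-- The image of `D₈` in `Perm (Fin 4)`. -/
def dihP0 : Subgroup (Equiv.Perm (Fin 4)) := dihToPerm.range

lemma card_dihP0 : Nat.card dihP0 = 8 := by
  have h := Nat.card_congr (MonoidHom.ofInjective dihToPerm_inj).toEquiv
  show Nat.card dihToPerm.range = 8
  rw [← h, DihedralGroup.nat_card]

/-- Conjugation of permutation groups by an equivalence, as a `MulEquiv`. -/
def permCongrMulEquiv {α β : Type*} (e : α ≃ β) : Equiv.Perm α ≃* Equiv.Perm β where
  toFun σ := (e.symm.trans σ).trans e
  invFun τ := (e.trans τ).trans e.symm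
  left_inv σ := by
    ext x
    simp
  right_inv τ := by
    ext x
    simp
  map_mul' σ τ := by
    ext x
    simp [Equiv.Perm.mul_apply]

lemma factorization_24 : (24 : ℕ).factorization 2 = 3 := by
  have hp : Nat.Prime 2 := by norm_num
  have h1 : 3 ≤ (24 : ℕ).factorization 2 :=
    (Nat.Prime.pow_dvd_iff_le_factorization hp (by norm_num)).mp (by norm_num)
  have h2 : ¬ 4 ≤ (24 : ℕ).factorization 2 := by
    intro hc
    have := (Nat.Prime.pow_dvd_iff_le_factorization hp (by norm_num)).mpr hc
    norm_num at this
  omega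

lemma hnot_case {V : Type*} [Fintype V] {Γ : SimpleGraph V} {M H : Subgroup (Equiv.Perm V)}
    (htetra : Tetravalent Γ) {u : V}
    (hM2 : Nat.card (localGroup Γ M u) = 2) (hH8 : Nat.card (localGroup Γ H u) = 8) :
    Nonempty (localGroup Γ M u ≃* Multiplicative (ZMod 2)) ∧
    Nonempty (localGroup Γ H u ≃* DihedralGroup 4) := by
  classical
  haveI : Fact (Nat.Prime 2) := ⟨by norm_num⟩
  constructor
  · exact ⟨mulEquivOfPrimeCardEq hM2 (by rw [Nat.card_eq_fintype_card]; rfl)⟩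
  · haveI : Fintype (Γ.neighborSet u) := Fintype.ofFinite _
    have hYc : Fintype.card (Γ.neighborSet u) = 4 := by
      rw [← Nat.card_eq_fintype_card]
      exact card_nbr htetra u
    set e : Γ.neighborSet u ≃ Fin 4 := Fintype.equivFinOfCardEq hYc
    set pc := permCongrMulEquiv e with hpc
    set K : Subgroup (Equiv.Perm (Fin 4)) :=
      Subgroup.map pc.toMonoidHom (localGroup Γ H u) with hK
    have e1 : localGroup Γ H u ≃* K := pc.subgroupMap _
    have hKcard : Nat.card K = 8 := by
      rw [← Nat.card_congr e1.toEquiv]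
      exact hH8
    have h24 : Nat.card (Equiv.Perm (Fin 4)) = 24 := by
      rw [Nat.card_eq_fintype_card, Fintype.card_perm]
      norm_num [Nat.factorial]
    have hfact : 8 = 2 ^ (Nat.card (Equiv.Perm (Fin 4))).factorization 2 := by
      rw [h24, factorization_24]
      norm_num
    set SK : Sylow 2 (Equiv.Perm (Fin 4)) := Sylow.ofCard K (hKcard.trans hfact) with hSK
    set SP : Sylow 2 (Equiv.Perm (Fin 4)) := Sylow.ofCard dihP0 (card_dihP0.trans hfact)
      with hSP
    have e2 : K ≃* dihP0 := Sylow.equiv SK SP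
    have e3 : DihedralGroup 4 ≃* dihP0 := MonoidHom.ofInjective dihToPerm_inj
    exact ⟨(e1.trans e2).trans e3.symm⟩

end Statement18Aux13

/-- From the proof of Theorem 1.3: for a maximal `(1/2, 1)`-pair `(M, H)` of a
connected tetravalent graph, if it is not the case that `M_u^{Γ(u)} ≅ Z_2` and
`H_u^{Γ(u)} ≅ D_8`, then `M_u^{Γ(u)}` is normal of index `2` in `H_u^{Γ(u)}` and `M`
is normal in `H`. -/
theorem statement18 {V : Type*} [Fintype V] (Γ : SimpleGraph V)
    (hconn : Γ.Connected) (htetra : Tetravalent Γ)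
    (M H : Subgroup (Equiv.Perm V)) (hpair : MaximalHalfPair Γ M H 1) (u : V)
    (hnot : ¬ (Nonempty (localGroup Γ M u ≃* Multiplicative (ZMod 2)) ∧
        Nonempty (localGroup Γ H u ≃* DihedralGroup 4))) :
    NormalIn (localGroup Γ M u) (localGroup Γ H u) ∧
    (localGroup Γ M u).relIndex (localGroup Γ H u) = 2 ∧
    NormalIn M H := by
  classical
  obtain ⟨hmax, hMhalf, hH1, hn2⟩ := hpair
  have hMH : M ≤ H := le_of_lt hmax.1
  have hHaut : H ≤ autGroup Γ := hH1.1
  have hMaut : M ≤ autGroup Γ := hMhalf.1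
  have hAT : ArcTransitive Γ H := arcTrans_of_sArc1 hH1
  have hVTM : VertexTransitive Γ M := hMhalf.2.1
  have hVTH : VertexTransitive Γ H := by
    intro x y
    obtain ⟨g, hg, hgy⟩ := hVTM x y
    exact ⟨g, hMH hg, hgy⟩
  have hnbne : (Γ.neighborSet u).Nonempty := by
    apply Set.nonempty_of_ncard_ne_zero
    rw [htetra u]
    norm_num
  obtain ⟨b₀, hb₀⟩ := hnbne
  have hab : Γ.Adj u b₀ := hb₀
  have hHcases := card_localGroup_H_cases htetra hH1 hn2 (⟨b₀, hb₀⟩ : Γ.neighborSet u)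
  have hMlb := localGroup_M_card_lb (a := u) (b := b₀) hMhalf hab htetra u
  have hMdvd : Nat.card (localGroup Γ M u) ∣ Nat.card (localGroup Γ H u) :=
    Subgroup.card_dvd_of_le (localGroup_mono hMH u)
  have hMneH := localGroup_M_ne_H (a := u) (b := b₀) hMhalf hab htetra hHaut hAT u
  have hMltH : Nat.card (localGroup Γ M u) ≠ Nat.card (localGroup Γ H u) := by
    intro hc
    exact hMneH (Subgroup.eq_of_le_of_card_ge (localGroup_mono hMH u) (le_of_eq hc.symm))
  have hMpos : 0 < Nat.card (localGroup Γ M u) := by omega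
  obtain ⟨mc, hmc⟩ : ∃ mc, Nat.card (localGroup Γ M u) = mc := ⟨_, rfl⟩
  rcases hHcases with hH4 | hH8
  · -- |H_loc| = 4
    have hM2 : Nat.card (localGroup Γ M u) = 2 := by
      have h4 : mc ∣ 4 := by rw [← hmc, ← hH4]; exact hMdvd
      have hle : mc ≤ 4 := Nat.le_of_dvd (by norm_num) h4
      have hlb : 2 ≤ mc := by omega
      have hne : mc ≠ 4 := by rw [← hmc, ← hH4] at *; omega
      rw [hmc]
      interval_cases mc
      · rfl
      · exact absurd h4 (by norm_num)
      · omega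
    have hcardHM : Nat.card (localGroup Γ H u) = 2 * Nat.card (localGroup Γ M u) := by
      rw [hH4, hM2]
    obtain ⟨hrel, hnormloc⟩ := relindex_normalIn (localGroup_mono hMH u) hcardHM hMpos
    have hall4 : ∀ w, Nat.card (localGroup Γ H w) = 4 := by
      intro w
      obtain ⟨g, hg, hgw⟩ := hVTH u w
      have h := localGroup_card_conj hHaut hg u
      rw [hgw] at h
      rw [← h, hH4]
    have hkerH : ∀ g ∈ H, g u = u → (∀ y ∈ Γ.neighborSet u, g y = y) → g = 1 := by
      intro g hg hgu hfix
      exact arc_stab_trivial hconn htetra hHaut hAT hall4 hab hg hgu (hfix b₀ hb₀)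
    have hkerM : ∀ g ∈ M, g u = u → (∀ y ∈ Γ.neighborSet u, g y = y) → g = 1 :=
      fun g hg => hkerH g (hMH hg)
    have hstabH := card_vertexStab_eq_local hHaut hkerH
    have hstabM := card_vertexStab_eq_local hMaut hkerM
    have hcardH := card_group_eq_vertexStab (Γ := Γ) hVTH u
    have hcardM := card_group_eq_vertexStab (Γ := Γ) hVTM u
    have hHM : Nat.card H = 2 * Nat.card M := by
      rw [hcardH, hcardM, hstabH, hstabM, hH4, hM2]
      ring
    have hMposG : 0 < Nat.card M := Nat.card_pos
    obtain ⟨_, hnormglob⟩ := relindex_normalIn hMH hHM hMposG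
    exact ⟨hnormloc, hrel, hnormglob⟩
  · -- |H_loc| = 8
    have hM4u : Nat.card (localGroup Γ M u) = 4 := by
      have h8 : mc ∣ 8 := by rw [← hmc, ← hH8]; exact hMdvd
      have hle : mc ≤ 8 := Nat.le_of_dvd (by norm_num) h8
      have hlb : 2 ≤ mc := by omega
      have hne : mc ≠ 8 := by rw [← hmc, ← hH8] at *; omega
      have hne2 : mc ≠ 2 := by
        intro hc
        exact hnot (hnot_case htetra (by rw [hmc, hc]) hH8)
      rw [hmc]
      interval_cases mc
      · omega
      · exact absurd h8 (by norm_num)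
      · rfl
      · exact absurd h8 (by norm_num)
      · exact absurd h8 (by norm_num)
      · exact absurd h8 (by norm_num)
      · omega
    have hcardHM : Nat.card (localGroup Γ H u) = 2 * Nat.card (localGroup Γ M u) := by
      rw [hH8, hM4u]
    obtain ⟨hrel, hnormloc⟩ := relindex_normalIn (localGroup_mono hMH u) hcardHM hMpos
    have hall8 : ∀ w, Nat.card (localGroup Γ H w) = 8 := by
      intro w
      obtain ⟨g, hg, hgw⟩ := hVTH u w
      have h := localGroup_card_conj hHaut hg u
      rw [hgw] at h
      rw [← h, hH8]
    have hallM4 : ∀ w, Nat.card (localGroup Γ M w) = 4 := by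
      intro w
      obtain ⟨g, hg, hgw⟩ := hVTM u w
      have h := localGroup_card_conj hMaut hg u
      rw [hgw] at h
      rw [← h, hM4u]
    have hnormglob := caseB_normal hconn hMhalf hab htetra hHaut hAT hmax hallM4 hall8
    exact ⟨hnormloc, hrel, hnormglob⟩
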